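/- arXiv:1709.05032 — 8 statements merged into one kernel-verified Lean document; each statement's English description precedes it below -/
import Mathlib

section
/- Let G be a finite simple graph on vertex set {1,…,n} with ordered edge set E (so |E| is twice the number of edges), and let f_ns(t) denote the infimum of F(p) = Σ_{(v,w)∈E} p(0,0|v,w) over all synchronous nonsignalling correlations p with p_A(0|v) = p_B(0|w) = t for all v,w. Then f_ns(t) = 0 for all 0 ≤ t ≤ 1/2, and f_ns(t) = |E|·(2t−1) for all 1/2 ≤ t ≤ 1. -/
open scoped BigOperators

/-- A correlation with `n` inputs and `2` outputs: `p i j v w` is `p(i,j|v,w)`. -/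
abbrev Corr (n : ℕ) := Fin 2 → Fin 2 → Fin n → Fin n → ℝ

/-- Nonsignalling correlation. -/
def IsNS {n : ℕ} (p : Corr n) : Prop :=
  (∀ i j v w, 0 ≤ p i j v w) ∧
  (∀ v w, ∑ i, ∑ j, p i j v w = 1) ∧
  (∀ i v w w', ∑ j, p i j v w = ∑ j, p i j v w') ∧
  (∀ j v v' w, ∑ i, p i j v w = ∑ i, p i j v' w)

/-- Synchronous correlation (for two outputs). -/
def IsSync {n : ℕ} (p : Corr n) : Prop :=
  ∀ v, p 0 1 v v = 0 ∧ p 1 0 v v = 0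

/-- Both marginals of outcome `0` are constantly equal to `t`. -/
def HasMarginals {n : ℕ} (p : Corr n) (t : ℝ) : Prop :=
  (∀ v w, ∑ j, p 0 j v w = t) ∧ (∀ v w, ∑ i, p i 0 v w = t)

/-- The (ordered) edge set of a graph `G` on `Fin n`, as a finset of ordered pairs. -/
def edgeFinset' {n : ℕ} (G : SimpleGraph (Fin n)) [DecidableRel G.Adj] :
    Finset (Fin n × Fin n) :=
  Finset.univ.filter fun vw : Fin n × Fin n => G.Adj vw.1 vw.2

/-- `F(p) = Σ_{(v,w) ∈ E} p(0,0|v,w)`. -/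
def Fval {n : ℕ} (G : SimpleGraph (Fin n)) [DecidableRel G.Adj] (p : Corr n) : ℝ :=
  ∑ vw ∈ edgeFinset' G, p 0 0 vw.1 vw.2

/-- `f_ns(t)`, the infimum of `F(p)` over synchronous nonsignalling correlations with
both marginals of outcome `0` constantly equal to `t`. -/
noncomputable def fns {n : ℕ} (G : SimpleGraph (Fin n)) [DecidableRel G.Adj] (t : ℝ) : ℝ :=
  sInf {s | ∃ p : Corr n, IsNS p ∧ IsSync p ∧ HasMarginals p t ∧ s = Fval G p}


/-!
Nonnegativity and the marginal constraints give the Fréchet bound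
`max 0 (2t - 1) ≤ p(0,0|v,w)` for every input pair. Conversely, for each `a` between that bound
and `t` there is a correlation that is perfectly correlated on the diagonal and has
`p(0,0|v,w) = a` at every pair `v ≠ w`; it is nonsignalling because the row and column sums of
each of its tables are `t` and `1 - t`, whatever `a` is. Edges of a simple graph are off-diagonal, so `f_ns(t)` is
`|E| · max 0 (2t - 1)`.
-/

open Finset

/-- The joint distribution of two `{0,1}`-valued outcomes, each equal to `0` with probability `t`,
that are both `0` with probability `a`. -/
def jointTable (t a : ℝ) : Fin 2 → Fin 2 → ℝ :=
  !![a, t - a; t - a, 1 - 2 * t + a]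

def diagCorr (n : ℕ) (t a : ℝ) : Corr n := fun i j v w =>
  jointTable t (if v = w then t else a) i j

lemma jointTable_nonneg {t a : ℝ} (ha₀ : 0 ≤ a) (ha₁ : 2 * t - 1 ≤ a) (hat : a ≤ t)
    (i j : Fin 2) : 0 ≤ jointTable t a i j := by
  fin_cases i <;> fin_cases j <;> simp [jointTable] <;> linarith

lemma sum_jointTable_row (t a : ℝ) (i : Fin 2) : ∑ j, jointTable t a i j = ![t, 1 - t] i := by
  fin_cases i <;> simp [jointTable, Fin.sum_univ_two]; ring

lemma sum_jointTable_col (t a : ℝ) (j : Fin 2) : ∑ i, jointTable t a i j = ![t, 1 - t] j := by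
  fin_cases j <;> simp [jointTable, Fin.sum_univ_two]; ring

lemma sum_sum_jointTable (t a : ℝ) : ∑ i, ∑ j, jointTable t a i j = 1 := by
  simp_rw [sum_jointTable_row, Fin.sum_univ_two]
  simp

section diagCorr

variable {n : ℕ} {t a : ℝ}

lemma isNS_diagCorr (ha₀ : 0 ≤ a) (ha₁ : 2 * t - 1 ≤ a) (hat : a ≤ t) :
    IsNS (diagCorr n t a) := by
  refine ⟨fun i j v w => ?_, fun v w => ?_, fun i v w w' => ?_, fun j v v' w => ?_⟩
  · apply jointTable_nonneg <;> split_ifs <;> linarith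
  · exact sum_sum_jointTable _ _
  · simp only [diagCorr, sum_jointTable_row]
  · simp only [diagCorr, sum_jointTable_col]

lemma isSync_diagCorr : IsSync (diagCorr n t a) := fun v => by
  simp [diagCorr, jointTable]

lemma hasMarginals_diagCorr : HasMarginals (diagCorr n t a) t :=
  ⟨fun _ _ => sum_jointTable_row _ _ 0, fun _ _ => sum_jointTable_col _ _ 0⟩

lemma fval_diagCorr (G : SimpleGraph (Fin n)) [DecidableRel G.Adj] :
    Fval G (diagCorr n t a) = (edgeFinset' G).card * a := by
  rw [Fval, ← nsmul_eq_mul, ← sum_const]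
  refine sum_congr rfl fun vw hvw => ?_
  have hne : vw.1 ≠ vw.2 := (mem_filter.mp hvw).2.ne
  simp [diagCorr, jointTable, hne]

end diagCorr

lemma max_le_of_isNS {n : ℕ} {p : Corr n} {t : ℝ} (hp : IsNS p) (hM : HasMarginals p t)
    (v w : Fin n) : max 0 (2 * t - 1) ≤ p 0 0 v w := by
  have hA := hM.1 v w
  have hB := hM.2 v w
  have hsum := hp.2.1 v w
  have h₁₁ := hp.1 1 1 v w
  simp only [Fin.sum_univ_two] at hA hB hsum
  exact max_le (hp.1 0 0 v w) (by linarith)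

lemma card_mul_le_fval {n : ℕ} (G : SimpleGraph (Fin n)) [DecidableRel G.Adj] {p : Corr n}
    {t : ℝ} (hp : IsNS p) (hM : HasMarginals p t) :
    (edgeFinset' G).card * max 0 (2 * t - 1) ≤ Fval G p := by
  rw [← nsmul_eq_mul]
  exact card_nsmul_le_sum _ _ _ fun vw _ => max_le_of_isNS hp hM vw.1 vw.2

theorem fns_eq {n : ℕ} (G : SimpleGraph (Fin n)) [DecidableRel G.Adj] {t : ℝ}
    (ht₀ : 0 ≤ t) (ht₁ : t ≤ 1) :
    fns G t = (edgeFinset' G).card * max 0 (2 * t - 1) := by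
  set a := max 0 (2 * t - 1)
  refine IsLeast.csInf_eq ⟨⟨diagCorr n t a, ?_, isSync_diagCorr, hasMarginals_diagCorr,
    (fval_diagCorr G).symm⟩, ?_⟩
  · exact isNS_diagCorr (le_max_left _ _) (le_max_right _ _) (max_le ht₀ (by linarith))
  · rintro s ⟨p, hp, -, hM, rfl⟩
    exact card_mul_le_fval G hp hM

theorem stmt0_general {n : ℕ} (G : SimpleGraph (Fin n)) [DecidableRel G.Adj] (t : ℝ) :
    (0 ≤ t → t ≤ 1 / 2 → fns G t = 0) ∧
    (1 / 2 ≤ t → t ≤ 1 → fns G t = ((edgeFinset' G).card : ℝ) * (2 * t - 1)) := by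
  refine ⟨fun ht₀ ht₁ => ?_, fun ht₀ ht₁ => ?_⟩
  · rw [fns_eq G ht₀ (by linarith), max_eq_left (by linarith), mul_zero]
  · rw [fns_eq G (by linarith) ht₁, max_eq_right (by linarith)]

theorem stmt0 {n : ℕ} (hn : 1 ≤ n) (G : SimpleGraph (Fin n)) [DecidableRel G.Adj] (t : ℝ) :
    (0 ≤ t → t ≤ 1 / 2 → fns G t = 0) ∧
    (1 / 2 ≤ t → t ≤ 1 → fns G t = ((edgeFinset' G).card : ℝ) * (2 * t - 1)) :=
  stmt0_general G t
end

section
/- Let G be a finite simple graph on vertex set {1,…,n} with ordered edge set E that is vertex transitive and edge transitive. For each graph automorphism π of G define β_π : ℝ^{4n²} → ℝ^{4n²} by β_π(p)(i,j|v,w) = p(i,j|π⁻¹(v),π⁻¹(w)). Let C ⊆ C_ns^s(n,2) be convex with β_π(C) ⊆ C for every automorphism π, and suppose Γ_C(t) := {p ∈ C : p_A(0|v) = p_B(0|w) = t for all v,w} is nonempty for t ∈ [0,1]. Then inf{Σ_{(v,w)∈E} p(0,0|v,w) : p ∈ Γ_C(t)} = inf{Σ_{(v,w)∈E} p(0,0|v,w)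 : p ∈ Γ_C(t) and p(0,0|v,w) = p(0,0|x,y) for all (v,w),(x,y) ∈ E}. -/
open scoped BigOperators

/-- A graph automorphism of `G`, as a permutation preserving adjacency in both directions. -/
def IsGraphAut {n : ℕ} (G : SimpleGraph (Fin n)) (π : Equiv.Perm (Fin n)) : Prop :=
  ∀ v w, G.Adj v w ↔ G.Adj (π v) (π w)

/-- Vertex transitivity. -/
def VertexTransitive {n : ℕ} (G : SimpleGraph (Fin n)) : Prop :=
  ∀ v w, ∃ π : Equiv.Perm (Fin n), IsGraphAut G π ∧ π v = w

/-- Edge transitivity (for the symmetric set of ordered pairs of adjacent vertices). -/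
def EdgeTransitive {n : ℕ} (G : SimpleGraph (Fin n)) : Prop :=
  ∀ v w x y, G.Adj v w → G.Adj x y →
    ∃ π : Equiv.Perm (Fin n), IsGraphAut G π ∧ π v = x ∧ π w = y

/-- The action `β_π(p)(i,j|v,w) = p(i,j|π⁻¹(v),π⁻¹(w))`. -/
def betaMap {n : ℕ} (π : Equiv.Perm (Fin n)) (p : Corr n) : Corr n :=
  fun i j v w => p i j (π⁻¹ v) (π⁻¹ w)

/-!
The two sets of objective values coincide. Averaging `p ∈ Γ_C(t)` over the automorphism group
of `G` stays in `C` (convexity and invariance), keeps the marginals (they are affine and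
automorphism-invariant) and keeps the objective (automorphisms permute the edges). The average
is invariant under every automorphism, so by edge transitivity it takes one value of
`p(0,0|v,w)` on all edges.
-/

variable {n : ℕ}

def autGroup (G : SimpleGraph (Fin n)) : Subgroup (Equiv.Perm (Fin n)) where
  carrier := {π | IsGraphAut G π}
  mul_mem' {σ π} hσ hπ v w := (hπ v w).trans (hσ (π v) (π w))
  one_mem' _ _ := Iff.rfl
  inv_mem' {σ} hσ v w := by simpa using (hσ (σ⁻¹ v) (σ⁻¹ w)).symm

lemma Fval_betaMap (G : SimpleGraph (Fin n)) [DecidableRel G.Adj] {π : Equiv.Perm (Fin n)}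
    (hπ : π ∈ autGroup G) (p : Corr n) : Fval G (betaMap π p) = Fval G p := by
  refine Finset.sum_equiv (π⁻¹.prodCongr π⁻¹) (fun vw => ?_) (fun _ _ => rfl)
  simpa [edgeFinset'] using (autGroup G).inv_mem hπ vw.1 vw.2

lemma hasMarginals_betaMap {p : Corr n} {t : ℝ} (π : Equiv.Perm (Fin n))
    (hp : HasMarginals p t) : HasMarginals (betaMap π p) t :=
  ⟨fun _ _ => hp.1 _ _, fun _ _ => hp.2 _ _⟩

lemma convex_setOf_hasMarginals (t : ℝ) : Convex ℝ {p : Corr n | HasMarginals p t} := by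
  intro p hp q hq a b _ _ hab
  constructor <;> intro v w <;>
    simp [Finset.sum_add_distrib, ← Finset.mul_sum, hp.1, hp.2, hq.1, hq.2, ← add_mul, hab]

section Average

open Classical

variable (H : Subgroup (Equiv.Perm (Fin n)))

noncomputable def groupAverage (p : Corr n) : Corr n :=
  ∑ π : H, (Fintype.card H : ℝ)⁻¹ • betaMap π p

lemma groupAverage_apply (p : Corr n) (i j : Fin 2) (v w : Fin n) :
    groupAverage H p i j v w =
      (Fintype.card H : ℝ)⁻¹ *
        ∑ π : H, p i j ((π : Equiv.Perm (Fin n))⁻¹ v) ((π : Equiv.Perm (Fin n))⁻¹ w) := by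
  simp [groupAverage, betaMap, Finset.sum_apply, Finset.mul_sum]

lemma groupAverage_mem {C : Set (Corr n)} (hconv : Convex ℝ C)
    (hinv : ∀ π ∈ H, ∀ p ∈ C, betaMap π p ∈ C) {p : Corr n} (hp : p ∈ C) :
    groupAverage H p ∈ C := by
  refine hconv.sum_mem (fun _ _ => by positivity) ?_ fun π _ => hinv π π.2 p hp
  simp [Finset.card_univ]

lemma groupAverage_apply_perm (p : Corr n) {σ : Equiv.Perm (Fin n)} (hσ : σ ∈ H)
    (i j : Fin 2) (v w : Fin n) :
    groupAverage H p i j (σ v) (σ w) = groupAverage H p i j v w := by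
  simp only [groupAverage_apply]
  congr 1
  refine (Fintype.sum_equiv (Equiv.mulLeft ⟨σ, hσ⟩) _ _ fun π => ?_).symm
  simp [mul_inv_rev]

lemma Fval_groupAverage (G : SimpleGraph (Fin n)) [DecidableRel G.Adj] (hH : H ≤ autGroup G)
    (p : Corr n) : Fval G (groupAverage H p) = Fval G p := by
  have hsum : Fval G (groupAverage H p) = ∑ π : H, (Fintype.card H : ℝ)⁻¹ * Fval G (betaMap π p) := by
    simp only [Fval, groupAverage_apply, Finset.mul_sum]
    exact Finset.sum_comm
  simp [hsum, Fval_betaMap G (hH _)]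

end Average

theorem stmt3_general {n : ℕ} (G : SimpleGraph (Fin n)) [DecidableRel G.Adj]
    (het : EdgeTransitive G)
    (C : Set (Corr n)) (hconv : Convex ℝ C)
    (hβ : ∀ (π : Equiv.Perm (Fin n)), IsGraphAut G π → ∀ p ∈ C, betaMap π p ∈ C)
    (t : ℝ) :
    sInf {s | ∃ p ∈ C, HasMarginals p t ∧ s = Fval G p} =
      sInf {s | ∃ p ∈ C, HasMarginals p t ∧
        (∀ v w x y, G.Adj v w → G.Adj x y → p 0 0 v w = p 0 0 x y) ∧ s = Fval G p} := by
  congr 1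
  ext s
  refine ⟨?_, fun ⟨p, hpC, hpt, _, hs⟩ => ⟨p, hpC, hpt, hs⟩⟩
  rintro ⟨p, hpC, hpt, rfl⟩
  have hq : groupAverage (autGroup G) p ∈ C ∩ {p | HasMarginals p t} :=
    groupAverage_mem _ (hconv.inter (convex_setOf_hasMarginals t))
      (fun π hπ _ hp => ⟨hβ π hπ _ hp.1, hasMarginals_betaMap π hp.2⟩) ⟨hpC, hpt⟩
  refine ⟨_, hq.1, hq.2, fun v w x y hvw hxy => ?_, (Fval_groupAverage _ G le_rfl p).symm⟩
  obtain ⟨σ, hσ, rfl, rfl⟩ := het v w x y hvw hxy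
  exact (groupAverage_apply_perm _ p hσ 0 0 v w).symm

theorem stmt3 {n : ℕ} (hn : 1 ≤ n) (G : SimpleGraph (Fin n)) [DecidableRel G.Adj]
    (hvt : VertexTransitive G) (het : EdgeTransitive G)
    (C : Set (Corr n)) (hC : ∀ p ∈ C, IsNS p ∧ IsSync p) (hconv : Convex ℝ C)
    (hβ : ∀ (π : Equiv.Perm (Fin n)), IsGraphAut G π → ∀ p ∈ C, betaMap π p ∈ C)
    (hne : ∀ t ∈ Set.Icc (0 : ℝ) 1, ∃ p ∈ C, HasMarginals p t)
    (t : ℝ) (ht : t ∈ Set.Icc (0 : ℝ) 1) :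
    sInf {s | ∃ p ∈ C, HasMarginals p t ∧ s = Fval G p} =
      sInf {s | ∃ p ∈ C, HasMarginals p t ∧
        (∀ v w x y, G.Adj v w → G.Adj x y → p 0 0 v w = p 0 0 x y) ∧ s = Fval G p} :=
  stmt3_general G het C hconv hβ t
end

section
/- Let G be a finite simple graph on vertices {1,…,n} with ordered edge set E that is vertex transitive and edge transitive, and let t ∈ [0,1] be irrational. Suppose the infimum defining f_q(t) is attained, i.e., there exist d ≥ 1, projections P₁,…,Pₙ ∈ M_d(ℂ), and a positive semidefinite ρ ∈ M_d(ℂ) with Tr(ρ) = 1, ρP_v = P_vρ and Tr(ρP_v) = t for all v, such that Σ_{(v,w)∈E} Tr(ρP_vP_w) = f_q(t). Then there exist rational numbers r and s with r ≤ t ≤ s (hence r < t < s, so the interval is nondegenerate) and real numbers a,b such that f_q(u) = a·u + b for all u ∈ [r,s]. -/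
open scoped BigOperators ComplexOrder

/-- A projection matrix: self-adjoint idempotent. -/
def IsProjMat {d : ℕ} (P : Matrix (Fin d) (Fin d) ℂ) : Prop :=
  P.IsHermitian ∧ P * P = P

/-- The set of values `Σ_{(v,w)∈E} Tr(ρ P_v P_w)` over all `d ≥ 1`, projections
`P₁,…,Pₙ ∈ M_d(ℂ)` and positive semidefinite `ρ ∈ M_d(ℂ)` with `Tr(ρ)=1`,
`ρ P_v = P_v ρ` and `Tr(ρ P_v) = t` for all `v`. -/
def fqSet {n : ℕ} (G : SimpleGraph (Fin n)) [DecidableRel G.Adj] (t : ℝ) : Set ℝ :=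
  {s | ∃ (d : ℕ), 1 ≤ d ∧
    ∃ (P : Fin n → Matrix (Fin d) (Fin d) ℂ) (ρ : Matrix (Fin d) (Fin d) ℂ),
      (∀ v, IsProjMat (P v)) ∧ ρ.PosSemidef ∧ ρ.trace = 1 ∧
      (∀ v, ρ * P v = P v * ρ) ∧ (∀ v, (ρ * P v).trace = (t : ℂ)) ∧
      (s : ℂ) = ∑ vw ∈ edgeFinset' G, (ρ * P vw.1 * P vw.2).trace}

/-- `f_q(t)` for the graph `G`. -/
noncomputable def fq {n : ℕ} (G : SimpleGraph (Fin n)) [DecidableRel G.Adj] (t : ℝ) : ℝ :=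
  sInf (fqSet G t)

/-!
Let `(P, ρ)` attain `f_q(t)`, let `E` be the spectral projection of `ρ` for a positive eigenvalue
and `r = Tr E`. For small `|ε|` the state `(1 - ε r) ρ + ε E` still commutes with every `P_v`, and
both its vertex values `(1 - ε r) t + ε Tr(E P_v)` and its edge weight depend affinely on `ε`.
Vertex transitivity lets us average the vertex values over the automorphism group (a direct sum
of relabelled copies), so the family lies in `fqSet` at `t + ε c` with
`c = (Σ_v Tr(E P_v)) / n - r t`, and `c ≠ 0` because the traces are integers while `t` is
irrational. Hence `f_q` lies below an affine function near `t` and touches it at `t`. Since `f_q`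
is convex (direct sums of admissible pairs again), it agrees with that affine function on a
neighbourhood of `t`, which contains an interval with rational endpoints around `t`.
-/

open Matrix Finset
open scoped MatrixOrder

theorem ConvexOn.eqOn_of_le_affine {s : Set ℝ} {f : ℝ → ℝ} (hf : ConvexOn ℝ s f) {t δ a b : ℝ}
    (hs : Set.Icc (t - δ) (t + δ) ⊆ s) (hle : ∀ u ∈ Set.Icc (t - δ) (t + δ), f u ≤ a * u + b)
    (ht : f t = a * t + b) : Set.EqOn f (fun u => a * u + b) (Set.Icc (t - δ) (t + δ)) := by
  intro u hu
  have hu' : 2 * t - u ∈ Set.Icc (t - δ) (t + δ) := ⟨by linarith [hu.2], by linarith [hu.1]⟩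
  have hmid := hf.2 (hs hu) (hs hu') (by norm_num : (0 : ℝ) ≤ 1 / 2)
    (by norm_num : (0 : ℝ) ≤ 1 / 2) (by norm_num)
  have hsum : (1 / 2 : ℝ) • u + (1 / 2 : ℝ) • (2 * t - u) = t := by
    simp only [smul_eq_mul]; ring
  rw [hsum, smul_eq_mul, smul_eq_mul] at hmid
  exact le_antisymm (hle u hu) (by linarith [hle _ hu'])

theorem card_nsmul_sum_smul_eq {H X M : Type*} [Group H] [Fintype H] [MulAction H X] [Fintype X]
    [MulAction.IsPretransitive H X] [AddCommMonoid M] (f : X → M) (x : X) :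
    Fintype.card X • ∑ h : H, f (h • x) = Fintype.card H • ∑ y, f y := by
  have hconst (y : X) : ∑ h : H, f (h • y) = ∑ h : H, f (h • x) := by
    obtain ⟨g, rfl⟩ := MulAction.exists_smul_eq H x y
    exact Fintype.sum_equiv (Equiv.mulRight g) _ _ fun h => by simp [mul_smul]
  calc Fintype.card X • ∑ h : H, f (h • x) = ∑ y : X, ∑ h : H, f (h • y) := by
        simp [hconst]
    _ = ∑ h : H, ∑ y, f (h • y) := sum_comm
    _ = ∑ h : H, ∑ y, f y := Fintype.sum_congr _ _ fun h => Equiv.sum_comp (MulAction.toPerm h) f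
    _ = Fintype.card H • ∑ y, f y := by simp

section Spectral

variable {𝕜 m : Type*} [RCLike 𝕜] [Fintype m]

theorem Matrix.posSemidef_blockDiagonal' {ι : Type*} [Fintype ι] [DecidableEq ι]
    {m' : ι → Type*} [∀ i, Fintype (m' i)] [∀ i, DecidableEq (m' i)]
    {M : ∀ i, Matrix (m' i) (m' i) 𝕜} (hM : ∀ i, (M i).PosSemidef) :
    (blockDiagonal' M).PosSemidef := by
  choose B hB using fun i => CStarAlgebra.nonneg_iff_eq_star_mul_self.mp (hM i).nonneg
  have hM' : blockDiagonal' M = (blockDiagonal' B)ᴴ * blockDiagonal' B := by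
    rw [blockDiagonal'_conjTranspose, ← blockDiagonal'_mul]
    exact congrArg _ (funext hB)
  rw [hM']
  exact Matrix.posSemidef_conjTranspose_mul_self _

theorem Matrix.isStarProjection_blockDiagonal' {ι α : Type*} [Fintype ι] [DecidableEq ι] [Semiring α]
    [StarRing α] {m' : ι → Type*} [∀ i, Fintype (m' i)]
    {M : ∀ i, Matrix (m' i) (m' i) α} (hM : ∀ i, IsStarProjection (M i)) :
    IsStarProjection (blockDiagonal' M) where
  isIdempotentElem := by
    rw [IsIdempotentElem, ← blockDiagonal'_mul]
    exact congrArg _ (funext fun i => (hM i).isIdempotentElem.eq)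
  isSelfAdjoint := by
    rw [IsSelfAdjoint, star_eq_conjTranspose, blockDiagonal'_conjTranspose]
    exact congrArg _ (funext fun i => (hM i).isSelfAdjoint.star_eq)

theorem IsStarProjection.exists_trace_eq_natCast [DecidableEq m] {E : Matrix m m 𝕜}
    (hE : IsStarProjection E) :
    ∃ k : ℕ, E.trace = k := by
  have hH : E.IsHermitian := hE.isSelfAdjoint
  have h01 (i : m) : hH.eigenvalues i = 0 ∨ hH.eigenvalues i = 1 :=
    hE.isIdempotentElem.spectrum_subset ℝ (hH.eigenvalues_mem_spectrum_real i)
  refine ⟨#{i | hH.eigenvalues i = 1}, ?_⟩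
  rw [hH.trace_eq_sum_eigenvalues, natCast_card_filter]
  refine sum_congr rfl fun i _ => ?_
  rcases h01 i with h | h <;> simp [h]

theorem Matrix.PosSemidef.trace_mul_mul_nonneg {ρ P Q : Matrix m m 𝕜} (hρ : ρ.PosSemidef)
    (hP : IsStarProjection P) (hQ : IsStarProjection Q) (hρP : Commute ρ P) :
    0 ≤ (ρ * P * Q).trace := by
  have hPQ : (Q * P)ᴴ = P * Q := by
    rw [conjTranspose_mul, ← star_eq_conjTranspose, ← star_eq_conjTranspose,
      hP.isSelfAdjoint.star_eq, hQ.isSelfAdjoint.star_eq]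
  have hPρP : P * ρ * P = ρ * P := by rw [← hρP.eq, mul_assoc, hP.isIdempotentElem.eq]
  have key : (Q * P * ρ * (Q * P)ᴴ).trace = (ρ * P * Q).trace :=
    calc (Q * P * ρ * (Q * P)ᴴ).trace = (Q * (P * ρ * P * Q)).trace := by
          simp only [hPQ, mul_assoc]
      _ = (P * ρ * P * Q * Q).trace := trace_mul_comm _ _
      _ = (ρ * P * Q).trace := by rw [hPρP, mul_assoc _ Q Q, hQ.isIdempotentElem.eq]
  rw [← key]
  exact (hρ.mul_mul_conjTranspose_same _).trace_nonneg

theorem Matrix.PosSemidef.exists_spectralProjection [DecidableEq m] {ρ : Matrix m m 𝕜}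
    (hρ : ρ.PosSemidef) (hρ0 : ρ ≠ 0) :
    ∃ E : Matrix m m 𝕜, IsStarProjection E ∧ E ≠ 0 ∧ (∀ B, Commute ρ B → Commute E B) ∧
      ∃ μ > 0, ∀ α ε : ℝ, 0 ≤ α → -(α * μ) ≤ ε → (α • ρ + ε • E).PosSemidef := by
  -- `E` is the spectral projection of `ρ` for a positive eigenvalue `μ`, so `μ • E ≤ ρ`.
  have hH := hρ.isHermitian
  obtain ⟨i, hi⟩ : ∃ i, hH.eigenvalues i ≠ 0 := by
    by_contra! h
    exact hρ0 (hH.eigenvalues_eq_zero_iff.mp (funext h))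
  set μ := hH.eigenvalues i
  have hμ : 0 < μ := lt_of_le_of_ne (hρ.eigenvalues_nonneg i) (Ne.symm hi)
  have hcont (g : ℝ → ℝ) : ContinuousOn g (spectrum ℝ ρ) := finite_real_spectrum.continuousOn g
  set f : ℝ → ℝ := fun x => if x = μ then 1 else 0
  refine ⟨cfc f ρ, ⟨?_, cfc_predicate f ρ⟩, ?_, fun B hB => hB.cfc_real f, μ, hμ, ?_⟩
  · rw [IsIdempotentElem, ← cfc_mul f f ρ (hcont f) (hcont f)]
    exact cfc_congr fun x _ => by by_cases h : x = μ <;> simp [f, h]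
  · intro h0
    have h1 : (1 : ℝ) ∈ spectrum ℝ (cfc f ρ) := by
      rw [cfc_map_spectrum f ρ (hf := hcont f)]
      exact ⟨μ, hH.eigenvalues_mem_spectrum_real i, by simp [f]⟩
    simp [h0, spectrum.mem_iff] at h1
  · intro α ε hα hε
    have hlin : α • ρ + ε • cfc f ρ = cfc (fun x => α * x + ε * f x) ρ := by
      rw [cfc_add (a := ρ) _ _ (hcont _) (hcont _), cfc_const_mul α (fun x => x) ρ (hcont _),
        cfc_const_mul ε f ρ (hcont f), cfc_id' ℝ ρ]
    rw [← nonneg_iff_posSemidef, hlin]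
    refine cfc_nonneg fun x hx => ?_
    have hx0 : 0 ≤ x := spectrum_nonneg_of_nonneg hρ.nonneg hx
    by_cases h : x = μ
    · simp only [f, h, if_true]; nlinarith
    · simp only [f, h, if_false, mul_zero, add_zero]; positivity

end Spectral

section Admissible

variable {n : ℕ} {m : Type*} [Fintype m]

/-- The constraints defining `fqSet`, apart from the vertex values `Tr(ρ P_v) = t`, over an
arbitrary finite index type. -/
structure IsAdmissible (P : Fin n → Matrix m m ℂ) (ρ : Matrix m m ℂ) : Prop where
  isStarProjection : ∀ v, IsStarProjection (P v)
  posSemidef : ρ.PosSemidef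
  trace_eq_one : ρ.trace = 1
  commute : ∀ v, Commute ρ (P v)

def edgeWeight (G : SimpleGraph (Fin n)) [DecidableRel G.Adj] (P : Fin n → Matrix m m ℂ)
    (ρ : Matrix m m ℂ) : ℂ :=
  ∑ vw ∈ edgeFinset' G, (ρ * P vw.1 * P vw.2).trace

variable (G : SimpleGraph (Fin n)) [DecidableRel G.Adj]

theorem edgeWeight_nonneg {P : Fin n → Matrix m m ℂ} {ρ : Matrix m m ℂ} (hρ : ρ.PosSemidef)
    (hP : ∀ v, IsStarProjection (P v)) (hρP : ∀ v, Commute ρ (P v)) : 0 ≤ edgeWeight G P ρ :=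
  sum_nonneg fun vw _ => hρ.trace_mul_mul_nonneg (hP vw.1) (hP vw.2) (hρP vw.1)

theorem edgeWeight_smul_add_smul (P : Fin n → Matrix m m ℂ) (α β : ℝ) (ρ₁ ρ₂ : Matrix m m ℂ) :
    edgeWeight G P (α • ρ₁ + β • ρ₂) = α * edgeWeight G P ρ₁ + β * edgeWeight G P ρ₂ := by
  simp only [edgeWeight, add_mul, smul_mul_assoc, trace_add, trace_smul, sum_add_distrib,
    Complex.real_smul, ← mul_sum]

theorem edgeWeight_comp_of_isGraphAut (P : Fin n → Matrix m m ℂ) (ρ : Matrix m m ℂ)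
    {π : Equiv.Perm (Fin n)} (hπ : IsGraphAut G π) :
    edgeWeight G (P ∘ π) ρ = edgeWeight G P ρ :=
  sum_equiv (π.prodCongr π) (fun vw => by simp [edgeFinset', hπ vw.1 vw.2]) fun _ _ => rfl

theorem IsAdmissible.comp {P : Fin n → Matrix m m ℂ} {ρ : Matrix m m ℂ} (h : IsAdmissible P ρ)
    (σ : Fin n → Fin n) : IsAdmissible (P ∘ σ) ρ :=
  ⟨fun v => h.isStarProjection (σ v), h.posSemidef, h.trace_eq_one, fun v => h.commute (σ v)⟩

theorem exists_isAdmissible_of_mem_fqSet {s t : ℝ} (hs : s ∈ fqSet G t) :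
    ∃ (d : ℕ) (P : Fin n → Matrix (Fin d) (Fin d) ℂ) (ρ : Matrix (Fin d) (Fin d) ℂ),
      IsAdmissible P ρ ∧ (∀ v, (ρ * P v).trace = t) ∧ (s : ℂ) = edgeWeight G P ρ := by
  obtain ⟨d, -, P, ρ, hP, hρ, htr, hcomm, hval, hs⟩ := hs
  exact ⟨d, P, ρ, ⟨fun v => ⟨(hP v).2, (hP v).1⟩, hρ, htr, hcomm⟩, hval, hs⟩

theorem IsAdmissible.mem_fqSet {P : Fin n → Matrix m m ℂ} {ρ : Matrix m m ℂ}
    (h : IsAdmissible P ρ) {s t : ℝ} (hval : ∀ v, (ρ * P v).trace = t)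
    (hs : (s : ℂ) = edgeWeight G P ρ) : s ∈ fqSet G t := by
  have : Nonempty m := by
    by_contra hm
    have := h.trace_eq_one
    simp [trace, not_nonempty_iff.mp hm] at this
  set e := (Fintype.equivFin m).symm
  let T (A : Matrix m m ℂ) := A.submatrix e e
  have hT_mul (A B : Matrix m m ℂ) : T (A * B) = T A * T B := (submatrix_mul_equiv A B e e e).symm
  have hT_trace (A : Matrix m m ℂ) : (T A).trace = A.trace := by
    simp only [trace, Matrix.diag, T, submatrix_apply]
    exact e.sum_comp fun i => A i i
  refine ⟨Fintype.card m, Fintype.card_pos, fun v => T (P v), T ρ,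
    fun v => ⟨(h.isStarProjection v).isSelfAdjoint.isHermitian.submatrix e, ?_⟩,
    h.posSemidef.submatrix e, by rw [hT_trace, h.trace_eq_one], fun v => ?_, fun v => ?_, ?_⟩
  · rw [← hT_mul, (h.isStarProjection v).isIdempotentElem.eq]
  · rw [← hT_mul, ← hT_mul, (h.commute v).eq]
  · rw [← hT_mul, hT_trace, hval v]
  · simp only [hs, edgeWeight, ← hT_mul, hT_trace]

end Admissible

section DirectSum

variable {n : ℕ} {ι : Type*} [Fintype ι] [DecidableEq ι] {m : ι → Type*} [∀ i, Fintype (m i)]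
  [∀ i, DecidableEq (m i)] (P : ∀ i, Fin n → Matrix (m i) (m i) ℂ) (ρ : ∀ i, Matrix (m i) (m i) ℂ)
  (w : ι → ℝ)

theorem IsAdmissible.blockDiagonal' (h : ∀ i, IsAdmissible (P i) (ρ i)) (hw₀ : ∀ i, 0 ≤ w i)
    (hw₁ : ∑ i, w i = 1) :
    IsAdmissible (fun v => blockDiagonal' fun i => P i v) (blockDiagonal' fun i => w i • ρ i) where
  isStarProjection v := isStarProjection_blockDiagonal' fun i => (h i).isStarProjection v
  posSemidef := posSemidef_blockDiagonal' fun i => (h i).posSemidef.smul (hw₀ i)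
  trace_eq_one := by
    simp only [trace_blockDiagonal', trace_smul, (h _).trace_eq_one, Complex.real_smul, mul_one]
    exact_mod_cast hw₁
  commute v := by
    simp only [Commute, SemiconjBy, ← blockDiagonal'_mul, smul_mul_assoc, mul_smul_comm,
      ((h _).commute v).eq]

theorem trace_blockDiagonal'_smul_mul (v : Fin n) :
    ((blockDiagonal' fun i => w i • ρ i) * blockDiagonal' fun i => P i v).trace =
      ∑ i, w i * (ρ i * P i v).trace := by
  simp only [← blockDiagonal'_mul, trace_blockDiagonal', smul_mul_assoc, trace_smul,
    Complex.real_smul]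

theorem edgeWeight_blockDiagonal' (G : SimpleGraph (Fin n)) [DecidableRel G.Adj] :
    edgeWeight G (fun v => blockDiagonal' fun i => P i v) (blockDiagonal' fun i => w i • ρ i) =
      ∑ i, w i * edgeWeight G (P i) (ρ i) := by
  simp only [edgeWeight, ← blockDiagonal'_mul, trace_blockDiagonal', smul_mul_assoc, trace_smul,
    Complex.real_smul, mul_sum]
  exact sum_comm

end DirectSum

section Convexity

open scoped Pointwise

variable {n : ℕ} (G : SimpleGraph (Fin n)) [DecidableRel G.Adj]

theorem fqSet_nonneg {s t : ℝ} (hs : s ∈ fqSet G t) : 0 ≤ s := by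
  obtain ⟨d, P, ρ, h, -, hs⟩ := exists_isAdmissible_of_mem_fqSet G hs
  exact_mod_cast hs ▸ edgeWeight_nonneg G h.posSemidef h.isStarProjection h.commute

theorem bddBelow_fqSet (t : ℝ) : BddBelow (fqSet G t) :=
  ⟨0, fun _ => fqSet_nonneg G⟩

theorem mul_add_mul_mem_fqSet {a b s₁ s₂ t₁ t₂ : ℝ} (ha : 0 ≤ a) (hb : 0 ≤ b) (hab : a + b = 1)
    (hs₁ : s₁ ∈ fqSet G t₁) (hs₂ : s₂ ∈ fqSet G t₂) :
    a * s₁ + b * s₂ ∈ fqSet G (a * t₁ + b * t₂) := by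
  obtain ⟨d₁, P₁, ρ₁, h₁, hval₁, hs₁⟩ := exists_isAdmissible_of_mem_fqSet G hs₁
  obtain ⟨d₂, P₂, ρ₂, h₂, hval₂, hs₂⟩ := exists_isAdmissible_of_mem_fqSet G hs₂
  let d : Bool → ℕ := fun i => bif i then d₁ else d₂
  let P : ∀ i, Fin n → Matrix (Fin (d i)) (Fin (d i)) ℂ := fun | true => P₁ | false => P₂
  let ρ : ∀ i, Matrix (Fin (d i)) (Fin (d i)) ℂ := fun | true => ρ₁ | false => ρ₂
  let w : Bool → ℝ := fun i => bif i then a else b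
  have h : ∀ i, IsAdmissible (P i) (ρ i) := fun | true => h₁ | false => h₂
  refine (IsAdmissible.blockDiagonal' P ρ w h (fun | true => ha | false => hb) ?_).mem_fqSet G
    (fun v => ?_) ?_
  · simpa [w] using hab
  · simp [trace_blockDiagonal'_smul_mul, P, ρ, w, hval₁, hval₂]
  · simp [edgeWeight_blockDiagonal', P, ρ, w, hs₁, hs₂]

theorem convexOn_fq : ConvexOn ℝ {t | (fqSet G t).Nonempty} (fq G) := by
  refine ⟨fun t₁ ⟨s₁, hs₁⟩ t₂ ⟨s₂, hs₂⟩ a b ha hb hab =>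
    ⟨_, mul_add_mul_mem_fqSet G ha hb hab hs₁ hs₂⟩, ?_⟩
  rintro t₁ ⟨s₁, hs₁⟩ t₂ ⟨s₂, hs₂⟩ a b ha hb hab
  have hsub : a • fqSet G t₁ + b • fqSet G t₂ ⊆ fqSet G (a • t₁ + b • t₂) := by
    rintro _ ⟨_, ⟨x₁, hx₁, rfl⟩, _, ⟨x₂, hx₂, rfl⟩, rfl⟩
    exact mul_add_mul_mem_fqSet G ha hb hab hx₁ hx₂
  have hne₁ : (a • fqSet G t₁).Nonempty := Set.Nonempty.smul_set ⟨s₁, hs₁⟩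
  have hne₂ : (b • fqSet G t₂).Nonempty := Set.Nonempty.smul_set ⟨s₂, hs₂⟩
  calc fq G (a • t₁ + b • t₂) ≤ sInf (a • fqSet G t₁ + b • fqSet G t₂) :=
        csInf_le_csInf (bddBelow_fqSet G _) (hne₁.add hne₂) hsub
    _ = a • fq G t₁ + b • fq G t₂ := by
      rw [csInf_add hne₁ ((bddBelow_fqSet G t₁).smul_of_nonneg ha) hne₂
        ((bddBelow_fqSet G t₂).smul_of_nonneg hb), Real.sInf_smul_of_nonneg ha,
        Real.sInf_smul_of_nonneg hb, fq, fq]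

end Convexity

section Symmetrization

variable {n : ℕ} (G : SimpleGraph (Fin n))

def autSubgroup : Subgroup (Equiv.Perm (Fin n)) where
  carrier := {π | IsGraphAut G π}
  one_mem' _ _ := Iff.rfl
  mul_mem' hπ hσ v w := (hσ v w).trans (hπ _ _)
  inv_mem' {π} hπ v w := by simpa using (hπ (π⁻¹ v) (π⁻¹ w)).symm

theorem VertexTransitive.isPretransitive (hvt : VertexTransitive G) :
    MulAction.IsPretransitive (autSubgroup G) (Fin n) :=
  ⟨fun v w => let ⟨π, hπ, hπv⟩ := hvt v w; ⟨⟨π, hπ⟩, hπv⟩⟩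

theorem IsAdmissible.mem_fqSet_average [DecidableRel G.Adj] (hvt : VertexTransitive G)
    {m : Type*} [Fintype m] {P : Fin n → Matrix m m ℂ} {ρ : Matrix m m ℂ} (h : IsAdmissible P ρ)
    {τ : Fin n → ℝ} (hτ : ∀ v, (ρ * P v).trace = τ v) {s : ℝ}
    (hs : (s : ℂ) = edgeWeight G P ρ) :
    s ∈ fqSet G ((∑ v, τ v) / n) := by
  classical
  have := hvt.isPretransitive
  let A := autSubgroup G
  have hA : (Fintype.card A : ℝ) ≠ 0 := Nat.cast_ne_zero.mpr Fintype.card_ne_zero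
  refine (IsAdmissible.blockDiagonal' (fun π : A => P ∘ π.1) (fun _ => ρ)
    (fun _ => 1 / Fintype.card A) (fun π => h.comp π.1) (fun _ => by positivity) ?_).mem_fqSet G
    (fun v => ?_) ?_
  · simp [hA]
  · have hn : (n : ℝ) ≠ 0 := Nat.cast_ne_zero.mpr v.pos.ne'
    have hcount := card_nsmul_sum_smul_eq (H := A) τ v
    simp only [Fintype.card_fin, nsmul_eq_mul, Subgroup.smul_def, Equiv.Perm.smul_def] at hcount
    have hmean : ∑ π : A, 1 / (Fintype.card A : ℝ) * τ (π.1 v) = (∑ w, τ w) / n := by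
      rw [← mul_sum, eq_div_iff hn]
      field_simp
      linarith
    rw [trace_blockDiagonal'_smul_mul]
    simp only [Function.comp_apply, hτ]
    exact_mod_cast hmean
  · have hinv (π : A) : edgeWeight G (P ∘ π.1) ρ = s :=
      (edgeWeight_comp_of_isGraphAut G P ρ π.2).trans hs.symm
    simp only [edgeWeight_blockDiagonal', hinv]
    simp

end Symmetrization

section Perturbation

variable {n : ℕ} (G : SimpleGraph (Fin n)) [DecidableRel G.Adj]

theorem IsAdmissible.exists_perturbation {m : Type*} [Fintype m] [DecidableEq m]
    {P : Fin n → Matrix m m ℂ} {ρ : Matrix m m ℂ} (h : IsAdmissible P ρ) :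
    ∃ (E : Matrix m m ℂ) (r : ℕ), IsStarProjection E ∧ (∀ v, Commute E (P v)) ∧
      E.trace = r ∧ r ≠ 0 ∧
      ∃ δ > (0 : ℝ), ∀ ε : ℝ, |ε| ≤ δ → IsAdmissible P ((1 - ε * r) • ρ + ε • E) := by
  have hρ0 : ρ ≠ 0 := fun h0 => by simpa [h0] using h.trace_eq_one
  obtain ⟨E, hE, hE0, hEcomm, μ, hμ, hpsd⟩ := h.posSemidef.exists_spectralProjection hρ0
  have hEP (v : Fin n) : Commute E (P v) := hEcomm _ (h.commute v)
  obtain ⟨r, hr⟩ := hE.exists_trace_eq_natCast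
  have hr0 : r ≠ 0 := by
    rintro rfl
    exact hE0 (hE.nonneg.posSemidef.trace_eq_zero_iff.mp (by simpa using hr))
  have hr' : (0 : ℝ) < r := by positivity
  refine ⟨E, r, hE, hEP, hr, hr0, min (1 / (2 * r)) (μ / 2), by positivity, fun ε hε => ?_⟩
  have hεr : |ε| * r ≤ 1 / 2 := by
    have := hε.trans (min_le_left _ _)
    rw [le_div_iff₀ (by positivity)] at this
    linarith
  have hεμ : |ε| ≤ μ / 2 := hε.trans (min_le_right _ _)
  have hα : 1 / 2 ≤ 1 - ε * r := by
    nlinarith [mul_le_mul_of_nonneg_right (le_abs_self ε) hr'.le]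
  refine ⟨h.isStarProjection, hpsd _ _ (by linarith) ?_, ?_, fun v =>
    ((h.commute v).smul_left _).add_left ((hEP v).smul_left _)⟩
  · nlinarith [mul_le_mul_of_nonneg_right hα hμ.le, neg_abs_le ε]
  · simp only [trace_add, trace_smul, h.trace_eq_one, hr, Complex.real_smul]
    push_cast
    ring

theorem exists_affine_family_mem_fqSet (hn : 1 ≤ n) (hvt : VertexTransitive G) {t : ℝ}
    (hirr : Irrational t) (hattained : fq G t ∈ fqSet G t) :
    ∃ c κ δ : ℝ, c ≠ 0 ∧ 0 < δ ∧ ∀ ε, |ε| ≤ δ → fq G t + ε * κ ∈ fqSet G (t + ε * c) := by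
  obtain ⟨d, P, ρ, h, hval, hs⟩ := exists_isAdmissible_of_mem_fqSet G hattained
  obtain ⟨E, r, hE, hEP, hr, hr0, δ, hδ, hadm⟩ := h.exists_perturbation
  choose σ hσ using fun v => (hE.mul (h.isStarProjection v) (hEP v)).exists_trace_eq_natCast
  obtain ⟨W, hW⟩ : ∃ W : ℝ, edgeWeight G P E = W :=
    ⟨_, Complex.eq_re_of_ofReal_le (r := 0) (by
      rw [Complex.ofReal_zero]
      exact edgeWeight_nonneg G hE.nonneg.posSemidef h.isStarProjection hEP)⟩
  have hc : ((∑ v, σ v : ℕ) : ℝ) / n - r * t ≠ 0 := fun h0 =>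
    (hirr.natCast_mul hr0).ne_rat ((∑ v, σ v : ℕ) / n) (by push_cast at h0 ⊢; linarith)
  refine ⟨_, W - r * fq G t, δ, hc, hδ, fun ε hε => ?_⟩
  have hmem := (hadm ε hε).mem_fqSet_average G hvt (τ := fun v => (1 - ε * r) * t + ε * σ v)
    (fun v => by
      simp only [add_mul, smul_mul_assoc, trace_add, trace_smul, hval, hσ, Complex.real_smul]
      push_cast
      ring)
    (s := fq G t + ε * (W - r * fq G t))
    (by rw [edgeWeight_smul_add_smul, hW, ← hs]; push_cast; ring)
  convert hmem using 2
  have hn' : (n : ℝ) ≠ 0 := Nat.cast_ne_zero.mpr (by omega)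
  simp only [sum_add_distrib, ← mul_sum, sum_const, card_univ, Fintype.card_fin, nsmul_eq_mul]
  push_cast
  field_simp
  ring

theorem exists_affine_majorant_fq (hn : 1 ≤ n) (hvt : VertexTransitive G) {t : ℝ}
    (hirr : Irrational t) (hattained : fq G t ∈ fqSet G t) :
    ∃ η > 0, ∃ a b : ℝ, fq G t = a * t + b ∧
      ∀ u ∈ Set.Icc (t - η) (t + η), (fqSet G u).Nonempty ∧ fq G u ≤ a * u + b := by
  obtain ⟨c, κ, δ, hc, hδ, hfam⟩ := exists_affine_family_mem_fqSet G hn hvt hirr hattained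
  refine ⟨δ * |c|, by positivity, κ / c, fq G t - κ / c * t, by ring, fun u hu => ?_⟩
  have hε : |(u - t) / c| ≤ δ := by
    rw [abs_div, div_le_iff₀ (abs_pos.mpr hc)]
    exact abs_sub_le_iff.mpr ⟨by linarith [hu.2], by linarith [hu.1]⟩
  have hmem := hfam _ hε
  rw [div_mul_cancel₀ _ hc, add_sub_cancel] at hmem
  refine ⟨⟨_, hmem⟩, (csInf_le (bddBelow_fqSet G u) hmem).trans_eq ?_⟩
  field_simp
  ring

end Perturbation

theorem stmt4_general {n : ℕ} (hn : 1 ≤ n) (G : SimpleGraph (Fin n)) [DecidableRel G.Adj]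
    (hvt : VertexTransitive G)
    (t : ℝ) (hirr : Irrational t)
    (hattained : fq G t ∈ fqSet G t) :
    ∃ r s : ℚ, (r : ℝ) ≤ t ∧ t ≤ (s : ℝ) ∧
      ∃ a b : ℝ, ∀ u ∈ Set.Icc (r : ℝ) (s : ℝ), fq G u = a * u + b := by
  obtain ⟨η, hη, a, b, ht, hmaj⟩ := exists_affine_majorant_fq G hn hvt hirr hattained
  have hlin := (convexOn_fq G).eqOn_of_le_affine (fun u hu => (hmaj u hu).1)
    (fun u hu => (hmaj u hu).2) ht
  obtain ⟨r, hr⟩ := exists_rat_btwn (show t - η < t by linarith)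
  obtain ⟨s, hs⟩ := exists_rat_btwn (show t < t + η by linarith)
  exact ⟨r, s, hr.2.le, hs.1.le, a, b, fun u hu =>
    hlin ⟨by linarith [hu.1, hr.1], by linarith [hu.2, hs.2]⟩⟩

theorem stmt4 {n : ℕ} (hn : 1 ≤ n) (G : SimpleGraph (Fin n)) [DecidableRel G.Adj]
    (hvt : VertexTransitive G) (het : EdgeTransitive G)
    (t : ℝ) (ht : t ∈ Set.Icc (0 : ℝ) 1) (hirr : Irrational t)
    (hattained : fq G t ∈ fqSet G t) :
    ∃ r s : ℚ, (r : ℝ) ≤ t ∧ t ≤ (s : ℝ) ∧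
      ∃ a b : ℝ, ∀ u ∈ Set.Icc (r : ℝ) (s : ℝ), fq G u = a * u + b :=
  stmt4_general hn G hvt t hirr hattained
end

section
/- Let A be a unital C*-algebra and τ : A → ℂ a faithful tracial state, i.e., a linear functional with τ(1) = 1, τ(x*x) ≥ 0 for all x ∈ A with equality only when x = 0, and τ(xy) = τ(yx) for all x,y ∈ A. Let a, p ∈ A be self-adjoint elements with ap ≠ pa. Then there exists a self-adjoint element h ∈ A such that the function g : ℝ → ℝ given by g(s) = Re τ(a · exp(ish) · p · exp(−ish)) (where exp is the exponential in the Banach algebra A and i is the imaginary unit) is differentiable at 0 with g'(0) > 0. -/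
/-!
Differentiating the conjugation at `s = 0` gives `g'(0) = Re τ (a * ⁅x, p⁆)` with `x = i h`,
which the trace property turns into `Re τ (⁅p, a⁆ * x)`. Taking `x = ⁅a, p⁆`, i.e. the
self-adjoint `h = -i ⁅a, p⁆`, makes this `τ (x⋆ x)`, positive by faithfulness since `a` and `p`
do not commute. Passing the derivative through `τ` needs continuity, which holds because positive
functionals on a C⋆-algebra are bounded.
-/

open scoped ComplexOrder

theorem LinearMap.continuous_of_nonneg_star_mul_self {A : Type*} [CStarAlgebra A]
    (τ : A →ₗ[ℂ] ℂ) (hτ : ∀ x : A, 0 ≤ τ (star x * x)) : Continuous τ := by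
  let _ : PartialOrder A := CStarAlgebra.spectralOrder A
  have : StarOrderedRing A := CStarAlgebra.spectralOrderedRing A
  have hτ_nonneg : ∀ x : A, 0 ≤ x → 0 ≤ τ x := fun x hx => by
    obtain ⟨y, rfl⟩ := CStarAlgebra.nonneg_iff_eq_star_mul_self.mp hx
    exact hτ y
  exact map_continuous (PositiveLinearMap.mk₀ τ hτ_nonneg)

theorem hasDerivAt_exp_smul_mul_exp_neg_smul {𝕂 A : Type*} [RCLike 𝕂] [NormedRing A]
    [NormedAlgebra 𝕂 A] [CompleteSpace A] (x y : A) :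
    HasDerivAt (fun t : 𝕂 => NormedSpace.exp (t • x) * y * NormedSpace.exp (-(t • x)))
      ⁅x, y⁆ 0 := by
  have hexp := hasDerivAt_exp_smul_const' (𝕂 := 𝕂) x 0
  have hexp_neg := hasDerivAt_exp_smul_const (𝕂 := 𝕂) (-x) 0
  simp only [smul_neg] at hexp_neg
  refine ((hexp.mul_const y).mul hexp_neg).congr_deriv ?_
  simp only [zero_smul, neg_zero, NormedSpace.exp_zero, one_mul, mul_one, Ring.lie_def]
  noncomm_ring

theorem hasDerivAt_re_apply_mul_exp_smul_mul_exp_neg_smul {A : Type*} [NormedRing A]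
    [NormedAlgebra ℂ A] [CompleteSpace A] (τ : A →L[ℂ] ℂ) (a x y : A) :
    HasDerivAt
      (fun s : ℝ => (τ (a * NormedSpace.exp (s • x) * y * NormedSpace.exp (-(s • x)))).re)
      (τ (a * ⁅x, y⁆)).re 0 := by
  let τ_re : A →L[ℝ] ℝ := Complex.reCLM.comp (τ.restrictScalars ℝ)
  have hconj := (hasDerivAt_exp_smul_mul_exp_neg_smul (𝕂 := ℝ) x y).const_mul a
  refine (τ_re.hasFDerivAt.comp_hasDerivAt (0 : ℝ) hconj).congr_of_eventuallyEq
    (.of_forall fun s => ?_)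
  simp only [τ_re, Function.comp_apply, ContinuousLinearMap.comp_apply,
    ContinuousLinearMap.coe_restrictScalars', Complex.reCLM_apply, mul_assoc]

theorem LinearMap.apply_mul_lie_of_apply_mul_comm {R A M : Type*} [Semiring R] [Ring A]
    [Module R A] [AddCommGroup M] [Module R M] (τ : A →ₗ[R] M)
    (hτ : ∀ x y : A, τ (x * y) = τ (y * x)) (a x y : A) :
    τ (a * ⁅x, y⁆) = τ (⁅y, a⁆ * x) := by
  simp only [Ring.lie_def, mul_sub, sub_mul, map_sub, ← mul_assoc]
  rw [hτ (a * x) y, mul_assoc y]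

theorem stmt5_general {A : Type*} [NormedRing A] [StarRing A] [CStarRing A]
    [CompleteSpace A] [NormedAlgebra ℂ A] [StarModule ℂ A]
    (τ : A →ₗ[ℂ] ℂ)
    (hτpos : ∀ x : A, 0 ≤ τ (star x * x))
    (hτfaithful : ∀ x : A, τ (star x * x) = 0 → x = 0)
    (hτtrace : ∀ x y : A, τ (x * y) = τ (y * x))
    (a p : A) (ha : IsSelfAdjoint a) (hp : IsSelfAdjoint p)
    (hne : a * p ≠ p * a) :
    ∃ h : A, IsSelfAdjoint h ∧ ∃ g' : ℝ, 0 < g' ∧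
      HasDerivAt
        (fun s : ℝ =>
          (τ (a * NormedSpace.exp (((s : ℂ) * Complex.I) • h) * p *
            NormedSpace.exp (-(((s : ℂ) * Complex.I) • h)))).re)
        g' 0 := by
  set c := ⁅a, p⁆
  have hc : c ≠ 0 := sub_ne_zero.mpr hne
  have hc_star : star c = -c := by
    simp only [c, Ring.lie_def, star_sub, star_mul, ha.star_eq, hp.star_eq, neg_sub]
  refine ⟨-(Complex.I • c), ?_, (τ (star c * c)).re, ?_, ?_⟩
  · rw [IsSelfAdjoint, star_neg, star_smul, hc_star, Complex.star_def, Complex.conj_I, neg_smul,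
      smul_neg, neg_neg]
  · have hpos : 0 < τ (star c * c) := (hτpos c).lt_of_ne' (mt (hτfaithful c) hc)
    exact (Complex.lt_def.mp hpos).1
  · have hτ_cont : Continuous τ := by
      let _ : CStarAlgebra A := {}
      exact τ.continuous_of_nonneg_star_mul_self hτpos
    have hderiv := hasDerivAt_re_apply_mul_exp_smul_mul_exp_neg_smul ⟨τ, hτ_cont⟩ a c p
    have hτ_lie : τ (a * ⁅c, p⁆) = τ (star c * c) := by
      rw [τ.apply_mul_lie_of_apply_mul_comm hτtrace, hc_star]
      simp only [c, Ring.lie_def, neg_sub]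
    have hsmul : ∀ s : ℝ, ((s : ℂ) * Complex.I) • -(Complex.I • c) = s • c := fun s => by
      rw [smul_neg, smul_smul, mul_assoc, Complex.I_mul_I, mul_neg_one, neg_smul, neg_neg,
        Complex.coe_smul]
    simpa only [hsmul, ContinuousLinearMap.coe_mk', hτ_lie] using hderiv

theorem stmt5 {A : Type*} [NormedRing A] [StarRing A] [CStarRing A]
    [CompleteSpace A] [NormedAlgebra ℂ A] [StarModule ℂ A]
    (τ : A →ₗ[ℂ] ℂ) (hτ1 : τ 1 = 1)
    (hτpos : ∀ x : A, 0 ≤ τ (star x * x))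
    (hτfaithful : ∀ x : A, τ (star x * x) = 0 → x = 0)
    (hτtrace : ∀ x y : A, τ (x * y) = τ (y * x))
    (a p : A) (ha : IsSelfAdjoint a) (hp : IsSelfAdjoint p)
    (hne : a * p ≠ p * a) :
    ∃ h : A, IsSelfAdjoint h ∧ ∃ g' : ℝ, 0 < g' ∧
      HasDerivAt
        (fun s : ℝ =>
          (τ (a * NormedSpace.exp (((s : ℂ) * Complex.I) • h) * p *
            NormedSpace.exp (-(((s : ℂ) * Complex.I) • h)))).re)
        g' 0 :=
  stmt5_general τ hτpos hτfaithful hτtrace a p ha hp hne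
end

section
/- Let G be a finite simple graph on vertices {1,…,n} with ordered edge set E and let t ∈ [0,1]. Suppose d ≥ 1, P₁,…,Pₙ ∈ M_d(ℂ) are projections, and ρ ∈ M_d(ℂ) is positive definite (positive semidefinite and invertible) with Tr(ρ) = 1, ρP_v = P_vρ and Tr(ρP_v) = t for all v, and suppose this instance attains the infimum: Σ_{(v,w)∈E} Tr(ρP_vP_w) = f_q(t). Then for every vertex v, the projection P_v commutes with p_v := Σ_{w : (v,w)∈E} P_w. -/
open scoped BigOperators ComplexOrder

/-!
Conjugating `P v` by the unitaries `exp (ε • K)`, where `K = ρ * [P v, p]` and `p` is the sum of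
the projections at the neighbours of `v`, keeps the configuration feasible for every real `ε`:
`K` is skew-Hermitian and commutes with `ρ`. Only the edges at `v` see the perturbation, and the
derivative of the objective at `ε = 0` is `-2 Tr (K Kᴴ)`. Since the objective is minimal at
`ε = 0`, this derivative vanishes, so `K = 0`, hence `[P v, p] = 0` because `ρ` is invertible.
-/

open Matrix NormedSpace Finset

section Trace

variable {m R : Type*} [Fintype m] [CommRing R]

theorem Matrix.trace_mul_commutator_add {ρ P p K : Matrix m m R} (hP : Commute ρ P)
    (hp : Commute ρ p) :
    (ρ * (K * P - P * K) * p).trace + (ρ * p * (K * P - P * K)).trace =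
      2 * (K * ρ * (P * p - p * P)).trace := by
  set X := K * P - P * K
  have hleft : (ρ * X * p).trace = (X * (ρ * p)).trace := by
    rw [Matrix.mul_assoc, trace_mul_comm, Matrix.mul_assoc, hp.eq]
  have hright : (ρ * p * X).trace = (X * (ρ * p)).trace := trace_mul_comm _ _
  have hX : (X * (ρ * p)).trace = (K * ρ * (P * p - p * P)).trace := by
    simp only [X, Matrix.sub_mul, Matrix.mul_sub, trace_sub, Matrix.mul_assoc]
    rw [← Matrix.mul_assoc P ρ, ← hP.eq, trace_mul_comm P, Matrix.mul_assoc]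
    simp only [Matrix.mul_assoc]
  rw [hleft, hright, hX, two_mul]

theorem Matrix.conjTranspose_mul_commutator [StarRing R] {ρ A B : Matrix m m R}
    (hρ : ρ.IsHermitian) (hA : A.IsHermitian) (hB : B.IsHermitian) (hρA : Commute ρ A)
    (hρB : Commute ρ B) : (ρ * (A * B - B * A))ᴴ = -(ρ * (A * B - B * A)) := by
  have hρC : Commute ρ (A * B - B * A) := (hρA.mul_right hρB).sub_right (hρB.mul_right hρA)
  rw [conjTranspose_mul, conjTranspose_sub, conjTranspose_mul, conjTranspose_mul, hρ.eq, hA.eq,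
    hB.eq, ← neg_sub, Matrix.neg_mul, ← hρC.eq]

theorem Matrix.eq_zero_of_re_trace_mul_conjTranspose_self {K : Matrix m m ℂ}
    (h : (K * Kᴴ).trace.re = 0) : K = 0 := by
  have hnonneg := (posSemidef_self_mul_conjTranspose K).trace_nonneg
  exact trace_mul_conjTranspose_self_eq_zero_iff.mp
    (Complex.ext h (Complex.nonneg_iff.mp hnonneg).2.symm)

end Trace

section Projection

variable {d : ℕ}

theorem IsProjMat.unitary_conj {P U : Matrix (Fin d) (Fin d) ℂ} (hP : IsProjMat P)
    (hU : U ∈ unitary (Matrix (Fin d) (Fin d) ℂ)) : IsProjMat (U * P * star U) := by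
  refine ⟨isHermitian_mul_mul_conjTranspose U hP.1, ?_⟩
  calc U * P * star U * (U * P * star U) = U * P * (star U * U) * P * star U := by
        simp only [Matrix.mul_assoc]
    _ = U * P * star U := by rw [Unitary.star_mul_self_of_mem hU, Matrix.mul_one,
        Matrix.mul_assoc U P P, hP.2]

theorem IsProjMat.trace_mul_mul_nonneg {σ Q R : Matrix (Fin d) (Fin d) ℂ} (hσ : σ.PosSemidef)
    (hσQ : Commute σ Q) (hQ : IsProjMat Q) (hR : IsProjMat R) : 0 ≤ (σ * Q * R).trace := by
  have hRQ : (R * Q)ᴴ = Q * R := by rw [conjTranspose_mul, hQ.1.eq, hR.1.eq]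
  have hQσQ : Q * σ * Q = σ * Q := by rw [← hσQ.eq, Matrix.mul_assoc, hQ.2]
  have key : (σ * Q * R).trace = (R * Q * σ * (R * Q)ᴴ).trace := by
    calc (σ * Q * R).trace = (Q * σ * Q * R * R).trace := by
          rw [hQσQ, Matrix.mul_assoc _ R R, hR.2]
      _ = (R * Q * σ * (R * Q)ᴴ).trace := by
          rw [hRQ, trace_mul_comm]
          simp only [Matrix.mul_assoc]
  exact key ▸ (hσ.mul_mul_conjTranspose_same (R * Q)).trace_nonneg

end Projection

theorem hasDerivAt_exp_smul_mul_mul_exp_smul {𝕂 𝔸 : Type*} [RCLike 𝕂] [NormedRing 𝔸]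
    [NormedAlgebra 𝕂 𝔸] [CompleteSpace 𝔸] (K A L : 𝔸) :
    HasDerivAt (fun ε : 𝕂 => exp (ε • K) * A * exp (ε • L)) (K * A + A * L) 0 := by
  simpa using ((hasDerivAt_exp_smul_const' K (0 : 𝕂)).mul_const A).fun_mul
    (hasDerivAt_exp_smul_const L (0 : 𝕂))

section MatrixExp

variable {m : Type*} [Fintype m] [DecidableEq m]

theorem Matrix.star_exp_smul (K : Matrix m m ℂ) (ε : ℝ) :
    star (exp (ε • K)) = exp (ε • Kᴴ) := by
  rw [star_eq_conjTranspose, ← exp_conjTranspose, conjTranspose_smul, star_trivial]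

theorem Matrix.exp_smul_mem_unitary {K : Matrix m m ℂ} (hK : Kᴴ = -K) (ε : ℝ) :
    exp (ε • K) ∈ unitary (Matrix m m ℂ) := by
  rw [Unitary.mem_iff, star_exp_smul, hK, smul_neg, Matrix.exp_neg]
  exact ⟨Matrix.nonsing_inv_mul _ ((isUnit_iff_isUnit_det _).mp (isUnit_exp _)),
    Matrix.mul_nonsing_inv _ ((isUnit_iff_isUnit_det _).mp (isUnit_exp _))⟩

attribute [local instance] Matrix.linftyOpNormedRing Matrix.linftyOpNormedAlgebra

theorem HasDerivAt.matrix_trace {f : ℝ → Matrix m m ℂ} {f' : Matrix m m ℂ} {x : ℝ}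
    (hf : HasDerivAt f f' x) : HasDerivAt (fun ε => (f ε).trace) f'.trace x :=
  (LinearMap.toContinuousLinearMap (traceLinearMap m ℝ ℂ)).hasFDerivAt.comp_hasDerivAt x hf

theorem Matrix.hasDerivAt_trace_mul_exp_conj (K A B C : Matrix m m ℂ) :
    HasDerivAt (fun ε : ℝ => (B * (exp (ε • K) * A * star (exp (ε • K))) * C).trace)
      (B * (K * A + A * Kᴴ) * C).trace 0 := by
  simp only [star_exp_smul]
  exact (((hasDerivAt_exp_smul_mul_mul_exp_smul (𝕂 := ℝ) K A Kᴴ).const_mul B).mul_const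
    C).matrix_trace

end MatrixExp

section EdgeEnergy

variable {n : ℕ} (G : SimpleGraph (Fin n)) [DecidableRel G.Adj]
  {m R : Type*} [Fintype m] [Semiring R]

def neighborSum {α : Type*} [AddCommMonoid α] (P : Fin n → α) (v : Fin n) : α :=
  ∑ w ∈ univ.filter fun w => G.Adj v w, P w

def edgeEnergy (ρ : Matrix m m R) (P : Fin n → Matrix m m R) : R :=
  ∑ vw ∈ edgeFinset' G, (ρ * P vw.1 * P vw.2).trace

theorem sum_edgeFinset'_ite_fst {α : Type*} [AddCommMonoid α] (v : Fin n) (f : Fin n → α) :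
    ∑ e ∈ edgeFinset' G, (if e.1 = v then f e.2 else 0) = neighborSum G f v := by
  rw [edgeFinset', sum_filter, Fintype.sum_prod_type, Fintype.sum_eq_single v (by simp_all)]
  simp [neighborSum, sum_filter]

theorem sum_edgeFinset'_ite_snd {α : Type*} [AddCommMonoid α] (v : Fin n) (f : Fin n → α) :
    ∑ e ∈ edgeFinset' G, (if e.2 = v then f e.1 else 0) = neighborSum G f v := by
  rw [edgeFinset', sum_filter, Fintype.sum_prod_type_right, Fintype.sum_eq_single v (by simp_all)]
  simp [neighborSum, sum_filter, G.adj_comm]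

theorem edgeEnergy_update (ρ : Matrix m m R) (P : Fin n → Matrix m m R) (v : Fin n)
    (A : Matrix m m R) :
    edgeEnergy G ρ (Function.update P v A) = edgeEnergy G ρ (Function.update P v 0) +
      (ρ * A * neighborSum G P v).trace + (ρ * neighborSum G P v * A).trace := by
  have hterm : ∀ e ∈ edgeFinset' G,
      (ρ * Function.update P v A e.1 * Function.update P v A e.2).trace =
        (ρ * Function.update P v 0 e.1 * Function.update P v 0 e.2).trace +
          (if e.1 = v then (ρ * A * P e.2).trace else 0) +
          (if e.2 = v then (ρ * P e.1 * A).trace else 0) := by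
    rintro ⟨a, b⟩ hab
    have hne : a ≠ b := G.ne_of_adj (by simpa [edgeFinset'] using hab)
    by_cases ha : a = v <;> by_cases hb : b = v <;> simp_all
  rw [edgeEnergy, sum_congr rfl hterm, sum_add_distrib, sum_add_distrib,
    sum_edgeFinset'_ite_fst G v fun w => (ρ * A * P w).trace,
    sum_edgeFinset'_ite_snd G v fun w => (ρ * P w * A).trace, edgeEnergy]
  simp only [neighborSum, mul_sum, sum_mul, trace_sum]

theorem ofReal_re_edgeEnergy {ρ : Matrix m m ℂ} {P : Fin n → Matrix m m ℂ} (hρ : ρ.IsHermitian)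
    (hP : ∀ v, (P v).IsHermitian) : ((edgeEnergy G ρ P).re : ℂ) = edgeEnergy G ρ P := by
  refine Complex.conj_eq_iff_re.mp ?_
  have hterm (a b : Fin n) : starRingEnd ℂ (ρ * P a * P b).trace = (ρ * P b * P a).trace := by
    rw [← Complex.star_def, ← trace_conjTranspose, conjTranspose_mul, conjTranspose_mul,
      hρ.eq, (hP a).eq, (hP b).eq, ← Matrix.mul_assoc, trace_mul_comm, Matrix.mul_assoc]
  rw [edgeEnergy, map_sum]
  simp only [hterm]
  exact sum_equiv (Equiv.prodComm _ _) (by simp [edgeFinset', G.adj_comm]) (fun _ _ => rfl)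

theorem hasDerivAt_edgeEnergy_update_exp_conj [DecidableEq m] (ρ : Matrix m m ℂ)
    (P : Fin n → Matrix m m ℂ) (v : Fin n) (K : Matrix m m ℂ) :
    HasDerivAt
      (fun ε : ℝ => edgeEnergy G ρ (Function.update P v (exp (ε • K) * P v * star (exp (ε • K)))))
      ((ρ * (K * P v + P v * Kᴴ) * neighborSum G P v).trace +
        (ρ * neighborSum G P v * (K * P v + P v * Kᴴ)).trace) 0 := by
  simp_rw [edgeEnergy_update G ρ P v (exp (_ • K) * P v * star (exp (_ • K)))]
  simpa using ((hasDerivAt_trace_mul_exp_conj K (P v) ρ (neighborSum G P v)).const_add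
    (edgeEnergy G ρ (Function.update P v 0))).fun_add
    (hasDerivAt_trace_mul_exp_conj K (P v) (ρ * neighborSum G P v) 1)

end EdgeEnergy

section Feasible

variable {n d : ℕ} {G : SimpleGraph (Fin n)} [DecidableRel G.Adj] {t : ℝ}

structure FqFeasible (t : ℝ) (P : Fin n → Matrix (Fin d) (Fin d) ℂ)
    (ρ : Matrix (Fin d) (Fin d) ℂ) : Prop where
  isProjMat : ∀ v, IsProjMat (P v)
  posSemidef : ρ.PosSemidef
  trace_eq_one : ρ.trace = 1
  commute : ∀ v, Commute ρ (P v)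
  trace_mul : ∀ v, (ρ * P v).trace = t

theorem nonneg_of_mem_fqSet {s : ℝ} (hs : s ∈ fqSet G t) : 0 ≤ s := by
  obtain ⟨d, -, P, ρ, hP, hρ, -, hcomm, -, hs⟩ := hs
  have : (0 : ℂ) ≤ s := hs ▸ sum_nonneg fun e _ =>
    IsProjMat.trace_mul_mul_nonneg hρ (hcomm e.1) (hP e.1) (hP e.2)
  exact_mod_cast this

namespace FqFeasible

variable {P : Fin n → Matrix (Fin d) (Fin d) ℂ} {ρ : Matrix (Fin d) (Fin d) ℂ}

theorem fq_le_re_edgeEnergy (h : FqFeasible t P ρ) (hd : 1 ≤ d) :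
    fq G t ≤ (edgeEnergy G ρ P).re :=
  csInf_le ⟨0, fun _ => nonneg_of_mem_fqSet⟩
    ⟨d, hd, P, ρ, h.isProjMat, h.posSemidef, h.trace_eq_one, h.commute, h.trace_mul,
      ofReal_re_edgeEnergy G h.posSemidef.isHermitian fun v => (h.isProjMat v).1⟩

theorem update_unitary_conj (h : FqFeasible t P ρ) {U : Matrix (Fin d) (Fin d) ℂ}
    (hU : U ∈ unitary (Matrix (Fin d) (Fin d) ℂ)) (hρU : Commute ρ U) (v : Fin n) :
    FqFeasible t (Function.update P v (U * P v * star U)) ρ := by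
  have hρU' : Commute ρ (star U) := by
    simpa [h.posSemidef.isHermitian.star_eq] using hρU.star_star
  refine ⟨?_, h.posSemidef, h.trace_eq_one, ?_, ?_⟩
  · exact (Function.forall_update_iff P fun _ Q => IsProjMat Q).mpr
      ⟨(h.isProjMat v).unitary_conj hU, fun w _ => h.isProjMat w⟩
  · exact (Function.forall_update_iff P fun _ Q => Commute ρ Q).mpr
      ⟨(hρU.mul_right (h.commute v)).mul_right hρU', fun w _ => h.commute w⟩
  · refine (Function.forall_update_iff P fun _ Q => (ρ * Q).trace = t).mpr
      ⟨?_, fun w _ => h.trace_mul w⟩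
    rw [← h.trace_mul v, ← Matrix.mul_assoc, ← Matrix.mul_assoc, hρU.eq, Matrix.mul_assoc U,
      Matrix.mul_assoc U, trace_mul_comm, Matrix.mul_assoc, Unitary.star_mul_self_of_mem hU,
      Matrix.mul_one]

theorem commute_neighborSum_of_fq_eq (h : FqFeasible t P ρ) (hd : 1 ≤ d) (hρ : ρ.PosDef)
    (hattain : (fq G t : ℂ) = edgeEnergy G ρ P) (v : Fin n) :
    Commute (P v) (neighborSum G P v) := by
  set p := neighborSum G P v
  have hρp : Commute ρ p := Commute.sum_right _ _ _ fun w _ => h.commute w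
  set C := P v * p - p * P v
  have hρC : Commute ρ C :=
    ((h.commute v).mul_right hρp).sub_right (hρp.mul_right (h.commute v))
  set K := ρ * C
  have hpH : p.IsHermitian := by
    simp only [IsHermitian, p, neighborSum, conjTranspose_sum, (h.isProjMat _).1.eq]
  have hK : Kᴴ = -K := conjTranspose_mul_commutator h.posSemidef.isHermitian
    (h.isProjMat v).1 hpH (h.commute v) hρp
  let E : ℝ → ℝ := fun ε =>
    (edgeEnergy G ρ (Function.update P v (exp (ε • K) * P v * star (exp (ε • K))))).re
  have hmin : IsLocalMin E 0 := by
    refine IsMinOn.isLocalMin (fun ε _ => ?_) Filter.univ_mem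
    calc E 0 = fq G t := by simp [E, ← hattain]
      _ ≤ E ε := (h.update_unitary_conj (exp_smul_mem_unitary hK ε)
        (((Commute.refl ρ).mul_right hρC).smul_right ε).exp_right v).fq_le_re_edgeEnergy hd
  have hderiv : HasDerivAt E (-2 * (K * Kᴴ).trace).re 0 := by
    have hval : (ρ * (K * P v + P v * Kᴴ) * p).trace + (ρ * p * (K * P v + P v * Kᴴ)).trace =
        -2 * (K * Kᴴ).trace := by
      rw [hK, Matrix.mul_neg, ← sub_eq_add_neg, trace_mul_commutator_add (h.commute v) hρp,
        Matrix.mul_assoc, Matrix.mul_neg, trace_neg]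
      ring
    rw [← hval]
    exact Complex.reCLM.hasFDerivAt.comp_hasDerivAt 0
      (hasDerivAt_edgeEnergy_update_exp_conj G ρ P v K)
  have hKK : (K * Kᴴ).trace.re = 0 := by
    simpa using hmin.hasDerivAt_eq_zero hderiv
  have hC : C = 0 :=
    hρ.isUnit.mul_right_eq_zero.mp (eq_zero_of_re_trace_mul_conjTranspose_self hKK)
  exact sub_eq_zero.mp hC

end FqFeasible

end Feasible

theorem stmt6_general {n : ℕ} (G : SimpleGraph (Fin n)) [DecidableRel G.Adj]
    (t : ℝ)
    (d : ℕ) (hd : 1 ≤ d)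
    (P : Fin n → Matrix (Fin d) (Fin d) ℂ) (ρ : Matrix (Fin d) (Fin d) ℂ)
    (hP : ∀ v, IsProjMat (P v)) (hρ : ρ.PosDef) (hρtr : ρ.trace = 1)
    (hcomm : ∀ v, ρ * P v = P v * ρ) (hmarg : ∀ v, (ρ * P v).trace = (t : ℂ))
    (hattain : ((fq G t : ℝ) : ℂ) = ∑ vw ∈ edgeFinset' G, (ρ * P vw.1 * P vw.2).trace) :
    ∀ v : Fin n, P v * (∑ w ∈ Finset.univ.filter fun w => G.Adj v w, P w) =
      (∑ w ∈ Finset.univ.filter fun w => G.Adj v w, P w) * P v :=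
  (FqFeasible.mk hP hρ.posSemidef hρtr hcomm hmarg).commute_neighborSum_of_fq_eq hd hρ hattain

theorem stmt6 {n : ℕ} (hn : 1 ≤ n) (G : SimpleGraph (Fin n)) [DecidableRel G.Adj]
    (t : ℝ) (ht : t ∈ Set.Icc (0 : ℝ) 1)
    (d : ℕ) (hd : 1 ≤ d)
    (P : Fin n → Matrix (Fin d) (Fin d) ℂ) (ρ : Matrix (Fin d) (Fin d) ℂ)
    (hP : ∀ v, IsProjMat (P v)) (hρ : ρ.PosDef) (hρtr : ρ.trace = 1)
    (hcomm : ∀ v, ρ * P v = P v * ρ) (hmarg : ∀ v, (ρ * P v).trace = (t : ℂ))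
    (hattain : ((fq G t : ℝ) : ℂ) = ∑ vw ∈ edgeFinset' G, (ρ * P vw.1 * P vw.2).trace) :
    ∀ v : Fin n, P v * (∑ w ∈ Finset.univ.filter fun w => G.Adj v w, P w) =
      (∑ w ∈ Finset.univ.filter fun w => G.Adj v w, P w) * P v :=
  stmt6_general G t d hd P ρ hP hρ hρtr hcomm hmarg hattain
end

section
/- Let n ≥ 3 and let G = K_n be the complete graph on n vertices, so its ordered edge set E consists of all pairs (v,w) with v ≠ w and |E| = n² − n. Then f_vect(t) = 0 for 0 ≤ t ≤ 1/n; f_vect(t) = nt(nt−1) for 1/n ≤ t ≤ (n−1)/n; and f_vect(t) = (n²−n)(2t−1) for (n−1)/n ≤ t ≤ 1. -/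
open scoped BigOperators

/-- A realization of `p` as a vectorial correlation, in a real Hilbert space. -/
structure VectRealization (n : ℕ) (p : Corr n) where
  H : Type
  [nacg : NormedAddCommGroup H]
  [ips : InnerProductSpace ℝ H]
  x : Fin n → Fin 2 → H
  y : Fin n → Fin 2 → H
  h : H
  hnorm : ‖h‖ = 1
  hxorth : ∀ v, inner ℝ (x v 0) (x v 1) = (0 : ℝ)
  hyorth : ∀ w, inner ℝ (y w 0) (y w 1) = (0 : ℝ)
  hxsum : ∀ v, x v 0 + x v 1 = h
  hysum : ∀ w, y w 0 + y w 1 = h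
  hval : ∀ i j v w, p i j v w = inner ℝ (x v i) (y w j)
  hnn : ∀ i j v w, 0 ≤ p i j v w

/-- `p` is a vectorial correlation. -/
def IsVect {n : ℕ} (p : Corr n) : Prop := Nonempty (VectRealization n p)

/-- `f_vect(t)` for the graph `G`: the infimum of `F(p)` over synchronous vectorial
correlations `p` whose marginals of outcome `0` are constantly equal to `t`. -/
noncomputable def fvect {n : ℕ} (G : SimpleGraph (Fin n)) [DecidableRel G.Adj] (t : ℝ) : ℝ :=
  sInf {s | ∃ p : Corr n, IsVect p ∧ IsSync p ∧ HasMarginals p t ∧ s = Fval G p}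

/-!
Synchronicity and the marginal conditions force `y v 0 = x v 0 =: u v` with
`‖u v‖² = ⟪u v, h⟫ = t`, so `p(0,0|v,w) = ⟪u v, u w⟫` and `p(1,1|v,w) = 1 - 2t + ⟪u v, u w⟫`.
Hence the edge sum over `K_n` is at least `0`, at least `(n² - n)(2t - 1)` termwise, and, being
`‖∑ u v‖² - n t ≥ ⟪∑ u v, h⟫² - n t`, at least `n t (n t - 1)`. Conversely, whenever
`max 0 (2t - 1) ≤ c ≤ t` and `t + (n - 1) c - n t² ≥ 0`, vectors `u v` with
`⟪u v, u w⟫ = c` for `v ≠ w` exist and give the edge sum `(n² - n) c`; on each of the three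
ranges of `t` the relevant lower bound is attained in this way.
-/

open Finset
open scoped RealInnerProductSpace

attribute [instance] VectRealization.nacg VectRealization.ips

theorem Finset.sum_offDiag_eq_sum_product_sub_sum {α M : Type*} [DecidableEq α]
    [AddCommGroup M] (s : Finset α) (f : α × α → M) :
    ∑ x ∈ s.offDiag, f x = ∑ x ∈ s ×ˢ s, f x - ∑ a ∈ s, f (a, a) := by
  rw [← diag_union_offDiag, sum_union (disjoint_diag_offDiag s), sum_diag]
  abel

section CompleteGraph

variable {n : ℕ}

theorem edgeFinset'_top : edgeFinset' (⊤ : SimpleGraph (Fin n)) = univ.offDiag := by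
  ext; simp [edgeFinset']

theorem card_edgeFinset'_top :
    ((edgeFinset' (⊤ : SimpleGraph (Fin n))).card : ℝ) = n ^ 2 - n := by
  rw [edgeFinset'_top, offDiag_card, card_univ, Fintype.card_fin,
    Nat.cast_sub (Nat.le_mul_self n)]
  push_cast
  ring

theorem Fval_top (p : Corr n) :
    Fval ⊤ p = ∑ v, ∑ w, p 0 0 v w - ∑ v, p 0 0 v v := by
  rw [Fval, edgeFinset'_top, sum_offDiag_eq_sum_product_sub_sum, univ_product_univ,
    Fintype.sum_prod_type]

end CompleteGraph

namespace VectRealization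

variable {n : ℕ} {p : Corr n} {t : ℝ} (R : VectRealization n p)

theorem inner_h_self : ⟪R.h, R.h⟫ = 1 := by
  rw [real_inner_self_eq_norm_sq, R.hnorm, one_pow]

theorem inner_x_zero_h (hm : HasMarginals p t) (v : Fin n) : ⟪R.x v 0, R.h⟫ = t := by
  rw [← hm.1 v v, Fin.sum_univ_two, R.hval, R.hval, ← inner_add_right, R.hysum]

theorem inner_h_y_zero (hm : HasMarginals p t) (w : Fin n) : ⟪R.h, R.y w 0⟫ = t := by
  rw [← hm.2 w w, Fin.sum_univ_two, R.hval, R.hval, ← inner_add_left, R.hxsum]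

theorem inner_x_zero_self (hm : HasMarginals p t) (v : Fin n) : ⟪R.x v 0, R.x v 0⟫ = t := by
  rw [← R.inner_x_zero_h hm v, ← R.hxsum v, inner_add_right, R.hxorth, add_zero]

theorem inner_y_zero_self (hm : HasMarginals p t) (w : Fin n) : ⟪R.y w 0, R.y w 0⟫ = t := by
  rw [← R.inner_h_y_zero hm w, ← R.hysum w, inner_add_left,
    real_inner_comm (R.y w 0) (R.y w 1), R.hyorth, add_zero]

theorem y_zero_eq_x_zero (hs : IsSync p) (hm : HasMarginals p t) (v : Fin n) :
    R.y v 0 = R.x v 0 := by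
  have hxy : ⟪R.x v 0, R.y v 0⟫ = t := by
    rw [← R.inner_x_zero_h hm v, ← R.hysum v, inner_add_right, ← R.hval 0 1, (hs v).1, add_zero]
  rw [← sub_eq_zero, ← inner_self_eq_zero (𝕜 := ℝ), inner_sub_left, inner_sub_right,
    inner_sub_right, real_inner_comm (R.x v 0), R.inner_x_zero_self hm, R.inner_y_zero_self hm,
    hxy]
  ring

theorem p_zero_zero_eq (hs : IsSync p) (hm : HasMarginals p t) (v w : Fin n) :
    p 0 0 v w = ⟪R.x v 0, R.x w 0⟫ := by
  rw [R.hval, R.y_zero_eq_x_zero hs hm]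

end VectRealization

theorem IsVect.two_mul_sub_one_le_zero_zero {n : ℕ} {p : Corr n} {t : ℝ} (hv : IsVect p)
    (hm : HasMarginals p t) (v w : Fin n) : 2 * t - 1 ≤ p 0 0 v w := by
  obtain ⟨R⟩ := hv
  have hx : R.x v 1 = R.h - R.x v 0 := eq_sub_of_add_eq' (R.hxsum v)
  have hy : R.y w 1 = R.h - R.y w 0 := eq_sub_of_add_eq' (R.hysum w)
  have h11 : p 1 1 v w = 1 - 2 * t + p 0 0 v w := by
    rw [R.hval, R.hval, hx, hy, inner_sub_left, inner_sub_right, inner_sub_right,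
      R.inner_h_self, R.inner_h_y_zero hm, R.inner_x_zero_h hm]
    ring
  linarith [R.hnn 1 1 v w]

section LowerBounds

variable {n : ℕ} {p : Corr n} {t : ℝ}

theorem Fval_nonneg (G : SimpleGraph (Fin n)) [DecidableRel G.Adj] (hv : IsVect p) :
    0 ≤ Fval G p := by
  obtain ⟨R⟩ := hv
  exact sum_nonneg fun vw _ => R.hnn 0 0 vw.1 vw.2

theorem card_edgeFinset'_mul_le_Fval (G : SimpleGraph (Fin n)) [DecidableRel G.Adj]
    (hv : IsVect p) (hm : HasMarginals p t) :
    (edgeFinset' G).card * (2 * t - 1) ≤ Fval G p := by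
  rw [← nsmul_eq_mul]
  exact card_nsmul_le_sum _ _ _ fun vw _ => hv.two_mul_sub_one_le_zero_zero hm vw.1 vw.2

/-- Cauchy–Schwarz against `h`: `‖∑ v, x v 0‖² ≥ (n t)²`, and the edge sum of `K_n` is
`‖∑ v, x v 0‖² - n t`. -/
theorem mul_le_Fval_top (hv : IsVect p) (hs : IsSync p) (hm : HasMarginals p t) :
    n * t * (n * t - 1) ≤ Fval ⊤ p := by
  obtain ⟨R⟩ := hv
  have hSS : ⟪∑ v, R.x v 0, ∑ w, R.x w 0⟫ = ∑ v, ∑ w, p 0 0 v w := by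
    rw [sum_inner]
    simp only [inner_sum, R.p_zero_zero_eq hs hm]
  have hSh : ⟪∑ v, R.x v 0, R.h⟫ = n * t := by
    simp [sum_inner, R.inner_x_zero_h hm]
  have hdiag : ∑ v, p 0 0 v v = n * t := by
    simp only [R.p_zero_zero_eq hs hm, R.inner_x_zero_self hm, sum_const, card_univ,
      Fintype.card_fin, nsmul_eq_mul]
  have hCS := real_inner_mul_inner_self_le (∑ v, R.x v 0) R.h
  rw [hSh, R.inner_h_self, mul_one] at hCS
  rw [Fval_top, ← hSS, hdiag]
  linarith

end LowerBounds

section Construction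

variable {E : Type} [NormedAddCommGroup E] [InnerProductSpace ℝ E] {n : ℕ}

def gramCorr (h : E) (u : Fin n → E) : Corr n :=
  fun i j v w => ⟪![u v, h - u v] i, ![u w, h - u w] j⟫

variable {h : E} {u : Fin n → E} {t : ℝ}

theorem gramCorr_zero_zero (v w : Fin n) : gramCorr h u 0 0 v w = ⟪u v, u w⟫ := rfl

theorem gramCorr_zero_one (huh : ∀ v, ⟪u v, h⟫ = t) (v w : Fin n) :
    gramCorr h u 0 1 v w = t - ⟪u v, u w⟫ := by
  simp [gramCorr, inner_sub_right, huh]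

theorem gramCorr_one_zero (huh : ∀ v, ⟪u v, h⟫ = t) (v w : Fin n) :
    gramCorr h u 1 0 v w = t - ⟪u v, u w⟫ := by
  simp [gramCorr, inner_sub_left, real_inner_comm (u w) h, huh]

theorem gramCorr_one_one (hh : ‖h‖ = 1) (huh : ∀ v, ⟪u v, h⟫ = t) (v w : Fin n) :
    gramCorr h u 1 1 v w = 1 - 2 * t + ⟪u v, u w⟫ := by
  simp [gramCorr, inner_sub_left, inner_sub_right, real_inner_comm (u w) h, huh, hh]
  ring

theorem isVect_isSync_hasMarginals_gramCorr (hh : ‖h‖ = 1) (huh : ∀ v, ⟪u v, h⟫ = t)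
    (huu : ∀ v, ⟪u v, u v⟫ = t) (hnonneg : ∀ v w, 0 ≤ ⟪u v, u w⟫)
    (hle : ∀ v w, ⟪u v, u w⟫ ≤ t) (hge : ∀ v w, 2 * t - 1 ≤ ⟪u v, u w⟫) :
    IsVect (gramCorr h u) ∧ IsSync (gramCorr h u) ∧ HasMarginals (gramCorr h u) t := by
  have hnn : ∀ i j v w, 0 ≤ gramCorr h u i j v w := by
    intro i j v w
    fin_cases i <;> fin_cases j
    · exact hnonneg v w
    · simpa [gramCorr_zero_one huh] using hle v w
    · simpa [gramCorr_one_zero huh] using hle v w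
    · simp only [Fin.mk_one, gramCorr_one_one hh huh]
      linarith [hge v w]
  have horth : ∀ v, ⟪u v, h - u v⟫ = 0 := fun v => by rw [inner_sub_right, huh, huu, sub_self]
  refine ⟨⟨
    { H := E
      x := fun v => ![u v, h - u v]
      y := fun v => ![u v, h - u v]
      h := h
      hnorm := hh
      hxorth := horth
      hyorth := horth
      hxsum := fun v => by simp
      hysum := fun v => by simp
      hval := fun _ _ _ _ => rfl
      hnn := hnn }⟩, fun v => ?_, fun v w => ?_, fun v w => ?_⟩
  · rw [gramCorr_zero_one huh, gramCorr_one_zero huh, huu, sub_self]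
    exact ⟨rfl, rfl⟩
  · rw [Fin.sum_univ_two, gramCorr_zero_zero, gramCorr_zero_one huh, add_sub_cancel]
  · rw [Fin.sum_univ_two, gramCorr_zero_zero, gramCorr_one_zero huh, add_sub_cancel]

end Construction

/-- `u v = t • e₀ + α • e_v + β • ∑ⱼ eⱼ` with `α² = t - c` and `n β² + 2 α β = c - t²`; the
condition on `t + (n - 1) c - n t²` is positive semidefiniteness of the Gram matrix of `u`
projected orthogonally to `h = e₀`. -/
theorem exists_unit_and_equiangular_family {n : ℕ} (hn : 0 < n) {t c : ℝ} (hct : c ≤ t)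
    (hD : 0 ≤ t + (n - 1) * c - n * t ^ 2) :
    ∃ (h : EuclideanSpace ℝ (Option (Fin n))) (u : Fin n → EuclideanSpace ℝ (Option (Fin n))),
      ‖h‖ = 1 ∧ (∀ v, ⟪u v, h⟫ = t) ∧ ∀ v w, ⟪u v, u w⟫ = if v = w then t else c := by
  obtain ⟨α, β, hα, hβ⟩ : ∃ α β : ℝ, α ^ 2 = t - c ∧ n * β ^ 2 + 2 * α * β = c - t ^ 2 := by
    have hnR : (0 : ℝ) < n := Nat.cast_pos.mpr hn
    have hsq := Real.sq_sqrt hD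
    have hα := Real.sq_sqrt (sub_nonneg.mpr hct)
    refine ⟨√(t - c), (√(t + (n - 1) * c - n * t ^ 2) - √(t - c)) / n, hα, ?_⟩
    field_simp
    linear_combination hsq - hα
  refine ⟨EuclideanSpace.single none 1,
    fun v => WithLp.toLp 2 fun k => k.elim t fun j => β + if j = v then α else 0,
    by simp, fun v => by simp [PiLp.inner_apply], fun v w => ?_⟩
  simp [PiLp.inner_apply, Fintype.sum_option, add_mul, mul_add, sum_add_distrib, ite_mul,
    mul_ite]
  split_ifs
  · linear_combination hβ + hα
  · linear_combination hβ

section Value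

variable {n : ℕ} {t c : ℝ}

theorem exists_corr_Fval_top_eq (hn : 0 < n) (hc0 : 0 ≤ c) (hc : 2 * t - 1 ≤ c) (hct : c ≤ t)
    (hD : 0 ≤ t + (n - 1) * c - n * t ^ 2) :
    ∃ p : Corr n, IsVect p ∧ IsSync p ∧ HasMarginals p t ∧ Fval ⊤ p = (n ^ 2 - n) * c := by
  obtain ⟨h, u, hh, huh, huu⟩ := exists_unit_and_equiangular_family hn hct hD
  have hbounds (v w : Fin n) : 0 ≤ ⟪u v, u w⟫ ∧ ⟪u v, u w⟫ ≤ t ∧ 2 * t - 1 ≤ ⟪u v, u w⟫ := by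
    rw [huu]; split_ifs <;> exact ⟨by linarith, by linarith, by linarith⟩
  obtain ⟨hv, hs, hm⟩ := isVect_isSync_hasMarginals_gramCorr hh huh
    (fun v => by rw [huu, if_pos rfl]) (fun v w => (hbounds v w).1)
    (fun v w => (hbounds v w).2.1) (fun v w => (hbounds v w).2.2)
  refine ⟨gramCorr h u, hv, hs, hm, ?_⟩
  rw [Fval, ← card_edgeFinset'_top, ← nsmul_eq_mul]
  refine sum_eq_card_nsmul fun vw hvw => ?_
  rw [gramCorr_zero_zero, huu, if_neg (by simpa [edgeFinset'] using hvw)]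

theorem fvect_top_eq (hn : 0 < n) (hc0 : 0 ≤ c) (hc : 2 * t - 1 ≤ c) (hct : c ≤ t)
    (hD : 0 ≤ t + (n - 1) * c - n * t ^ 2)
    (hlow : ∀ p : Corr n, IsVect p → IsSync p → HasMarginals p t → (n ^ 2 - n) * c ≤ Fval ⊤ p) :
    fvect (⊤ : SimpleGraph (Fin n)) t = (n ^ 2 - n) * c := by
  obtain ⟨p, hv, hs, hm, hp⟩ := exists_corr_Fval_top_eq hn hc0 hc hct hD
  refine IsLeast.csInf_eq ⟨⟨p, hv, hs, hm, hp.symm⟩, ?_⟩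
  rintro _ ⟨q, hv, hs, hm, rfl⟩
  exact hlow q hv hs hm

theorem fvect_top_eq_mul_mul_sub_one (hn : 1 < n) (hnt1 : 1 ≤ n * t) (hnt2 : n * t ≤ n - 1) :
    fvect (⊤ : SimpleGraph (Fin n)) t = n * t * (n * t - 1) := by
  have hn1 : (0 : ℝ) < n - 1 := by
    have : (1 : ℝ) < n := by exact_mod_cast hn
    linarith
  have ht0 : 0 ≤ t := by nlinarith
  have ht1 : t ≤ 1 := by nlinarith
  -- the off-diagonal value for which `t + (n - 1) c - n t² ≥ 0` is tight
  obtain ⟨c, hcdef⟩ : ∃ c : ℝ, (n - 1) * c = t * (n * t - 1) := ⟨_, mul_div_cancel₀ _ hn1.ne'⟩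
  have hc : n * t * (n * t - 1) = (n ^ 2 - n) * c := by linear_combination -n * hcdef
  rw [hc]
  refine fvect_top_eq (by omega) (by nlinarith [mul_nonneg ht0 (sub_nonneg.2 hnt1)])
    (by nlinarith [mul_nonneg (sub_nonneg.2 ht1) (sub_nonneg.2 hnt2)])
    (by nlinarith [mul_nonneg ht0 (sub_nonneg.2 ht1)]) (le_of_eq (by linear_combination -hcdef))
    fun p hv hs hm => hc ▸ mul_le_Fval_top hv hs hm

end Value

/-- On the complete graph `K_n = (⊤ : SimpleGraph (Fin n))` (whose ordered edge set consists of
all pairs `(v,w)` with `v ≠ w`, so `|E| = n² - n`), the function `f_vect` is given piecewise. -/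
theorem stmt9 {n : ℕ} (hn : 3 ≤ n) (t : ℝ) :
    (0 ≤ t → t ≤ 1 / n → fvect (⊤ : SimpleGraph (Fin n)) t = 0) ∧
    (1 / n ≤ t → t ≤ (n - 1) / n →
      fvect (⊤ : SimpleGraph (Fin n)) t = n * t * (n * t - 1)) ∧
    ((n - 1) / n ≤ t → t ≤ 1 →
      fvect (⊤ : SimpleGraph (Fin n)) t = ((n : ℝ) ^ 2 - n) * (2 * t - 1)) := by
  have hn0 : 0 < n := by omega
  have hn3 : (3 : ℝ) ≤ n := by exact_mod_cast hn
  have hnR : (0 : ℝ) < n := by linarith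
  refine ⟨fun ht0 ht1 => ?_, fun ht1 ht2 => ?_, fun ht1 ht2 => ?_⟩
  · have hnt : n * t ≤ 1 := by rwa [le_div_iff₀ hnR, mul_comm] at ht1
    simpa using fvect_top_eq (c := 0) hn0 le_rfl (by nlinarith) ht0 (by nlinarith)
      fun p hv _ _ => by simpa using Fval_nonneg ⊤ hv
  · exact fvect_top_eq_mul_mul_sub_one (by omega) (by rwa [div_le_iff₀ hnR, mul_comm] at ht1)
      (by rwa [le_div_iff₀ hnR, mul_comm] at ht2)
  · have hnt : n - 1 ≤ n * t := by rwa [div_le_iff₀ hnR, mul_comm] at ht1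
    exact fvect_top_eq hn0 (by nlinarith) le_rfl (by linarith) (by nlinarith)
      fun p hv _ hm => card_edgeFinset'_top ▸ card_edgeFinset'_mul_le_Fval ⊤ hv hm
end

section
/- Let n,k ≥ 1, let H be a Hilbert space and let x_{v,i}, y_{w,j}, h ∈ H (1 ≤ v,w ≤ n, 1 ≤ i,j ≤ k) satisfy ‖h‖ = 1; ⟨x_{v,i}, x_{v,j}⟩ = 0 for all v and all i ≠ j; ⟨y_{w,i}, y_{w,j}⟩ = 0 for all w and all i ≠ j; h = Σ_i x_{v,i} = Σ_j y_{w,j} for all v,w; and ⟨x_{v,i}, y_{w,j}⟩ ≥ 0 for all v,w,i,j. If the resulting vectorial correlation p(i,j|v,w) = ⟨x_{v,i}, y_{w,j}⟩ is synchronous, i.e., ⟨x_{v,i}, y_{v,j}⟩ = 0 for every v and all i ≠ j, then x_{v,i} = y_{v,i} for all v and all i. -/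
open scoped RealInnerProductSpace InnerProductSpace

section OrthogonalDecomposition

variable {𝕜 E ι : Type*} [RCLike 𝕜] [NormedAddCommGroup E] [InnerProductSpace 𝕜 E] [Fintype ι]

theorem inner_sum_eq_inner_of_forall_ne {u : E} {f : ι → E} (i : ι)
    (h : ∀ j, j ≠ i → ⟪u, f j⟫_𝕜 = 0) : ⟪u, ∑ j, f j⟫_𝕜 = ⟪u, f i⟫_𝕜 := by
  rw [inner_sum]
  exact Finset.sum_eq_single_of_mem i (Finset.mem_univ i) fun j _ hj => h j hj

theorem eq_of_sum_eq_of_pairwise_inner_eq_zero {x y : ι → E}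
    (hx : Pairwise fun i j => ⟪x i, x j⟫_𝕜 = 0) (hy : Pairwise fun i j => ⟪y i, y j⟫_𝕜 = 0)
    (hxy : Pairwise fun i j => ⟪x i, y j⟫_𝕜 = 0) (hsum : ∑ i, x i = ∑ i, y i) : x = y := by
  funext i
  -- Pairing `x i` and `y i` with the common sum, read once as `∑ x` and once as `∑ y`,
  -- shows that both are orthogonal to `x i - y i`.
  have hx_perp : ⟪x i, x i - y i⟫_𝕜 = 0 := by
    have hxx := inner_sum_eq_inner_of_forall_ne (u := x i) (f := x) i fun j hj => hx hj.symm
    have hxy' := inner_sum_eq_inner_of_forall_ne (u := x i) (f := y) i fun j hj => hxy hj.symm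
    rw [inner_sub_right, ← hxx, ← hxy', hsum, sub_self]
  have hy_perp : ⟪y i, x i - y i⟫_𝕜 = 0 := by
    have hyx := inner_sum_eq_inner_of_forall_ne (u := y i) (f := x) i
      fun j hj => inner_eq_zero_symm.mp (hxy hj)
    have hyy := inner_sum_eq_inner_of_forall_ne (u := y i) (f := y) i fun j hj => hy hj.symm
    rw [inner_sub_right, ← hyx, ← hyy, hsum, sub_self]
  rw [← sub_eq_zero, ← inner_self_eq_zero (𝕜 := 𝕜), inner_sub_left, hx_perp, hy_perp, sub_self]

end OrthogonalDecomposition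

theorem stmt18_general {n k : ℕ}
    {H : Type*} [NormedAddCommGroup H] [InnerProductSpace ℝ H]
    (x : Fin n → Fin k → H) (y : Fin n → Fin k → H) (h : H)
    (hxorth : ∀ (v : Fin n) (i j : Fin k), i ≠ j → ⟪x v i, x v j⟫ = 0)
    (hyorth : ∀ (w : Fin n) (i j : Fin k), i ≠ j → ⟪y w i, y w j⟫ = 0)
    (hxsum : ∀ v : Fin n, ∑ i, x v i = h)
    (hysum : ∀ w : Fin n, ∑ j, y w j = h)
    (hsync : ∀ (v : Fin n) (i j : Fin k), i ≠ j → ⟪x v i, y v j⟫ = 0) :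
    ∀ (v : Fin n) (i : Fin k), x v i = y v i := fun v =>
  congrFun <| eq_of_sum_eq_of_pairwise_inner_eq_zero (hxorth v) (hyorth v) (hsync v)
    ((hxsum v).trans (hysum v).symm)

/-- If vectors in a real Hilbert space realize a synchronous vectorial correlation, then
`x_{v,i} = y_{v,i}` for all `v` and `i`. -/
theorem stmt18 {n k : ℕ} (hn : 1 ≤ n) (hk : 1 ≤ k)
    {H : Type*} [NormedAddCommGroup H] [InnerProductSpace ℝ H] [CompleteSpace H]
    (x : Fin n → Fin k → H) (y : Fin n → Fin k → H) (h : H)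
    (hnorm : ‖h‖ = 1)
    (hxorth : ∀ (v : Fin n) (i j : Fin k), i ≠ j → ⟪x v i, x v j⟫ = 0)
    (hyorth : ∀ (w : Fin n) (i j : Fin k), i ≠ j → ⟪y w i, y w j⟫ = 0)
    (hxsum : ∀ v : Fin n, ∑ i, x v i = h)
    (hysum : ∀ w : Fin n, ∑ j, y w j = h)
    (hnn : ∀ (v w : Fin n) (i j : Fin k), 0 ≤ ⟪x v i, y w j⟫)
    (hsync : ∀ (v : Fin n) (i j : Fin k), i ≠ j → ⟪x v i, y v j⟫ = 0) :
    ∀ (v : Fin n) (i : Fin k), x v i = y v i :=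
  stmt18_general x y h hxorth hyorth hxsum hysum hsync
end

section
/- Let m ≥ 1 and let x₁,…,xₙ ∈ ℝ^m be unit vectors. Then there exist d ≥ 1 and projections P_{v,i} ∈ M_d(ℂ) (for v ∈ {1,…,n} and i ∈ {0,1}) with P_{v,0} + P_{v,1} = I for every v, such that (1/d)·Tr(P_{v,i}P_{w,j}) = (1/4)·(1 + (−1)^{i+j}⟨x_v, x_w⟩) for all v,w ∈ {1,…,n} and all i,j ∈ {0,1}. -/
/-!
The Clifford relations are realised on `ℂ^(2^m)`, with basis the bit strings
`s : Fin m → ZMod 2`, by the Jordan–Wigner matrices: `γ_k` flips bit `k` and multiplies by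
`(-1)^(s_0 + ⋯ + s_(k-1))`. The signs make the `γ_k` pairwise anticommuting involutions, and
they are Hermitian and trace-free. Hence `C(a) = ∑ a_k γ_k` satisfies
`C(a)C(b) + C(b)C(a) = 2⟨a, b⟩ I`: for a unit vector `C(a)² = I`, so `(I ± C(a))/2` are
complementary projections, and taking traces (with `Tr(C(a)C(b)) = Tr(C(b)C(a))`) gives
`Tr(C(a)C(b)) = d⟨a, b⟩`, from which the trace formula follows.
-/

open scoped BigOperators

open scoped InnerProductSpace

namespace JordanWigner

lemma add_single_add_single_self {ι : Type*} [DecidableEq ι] (s : ι → ZMod 2) (k : ι) :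
    s + Pi.single k 1 + Pi.single k 1 = s := by
  rw [add_assoc, ← Pi.single_add, CharTwo.add_self_eq_zero, Pi.single_zero, add_zero]

lemma eq_add_single_comm {ι : Type*} [DecidableEq ι] {s t : ι → ZMod 2} {k : ι} :
    s = t + Pi.single k 1 ↔ t = s + Pi.single k 1 := by
  constructor <;> rintro rfl <;> rw [add_single_add_single_self]

variable {ι : Type*} [Fintype ι] [LinearOrder ι]

def parity (k : ι) (s : ι → ZMod 2) : ZMod 2 := ∑ j with j < k, s j

lemma parity_add_single (k l : ι) (s : ι → ZMod 2) :
    parity k (s + Pi.single l 1) = parity k s + if l < k then 1 else 0 := by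
  simp [parity, Finset.sum_add_distrib, Finset.sum_pi_single']

def sign (k : ι) (s : ι → ZMod 2) : ℤˣ := (-1) ^ parity k s

lemma sign_add_single (k l : ι) (s : ι → ZMod 2) :
    sign k (s + Pi.single l 1) = if l < k then -sign k s else sign k s := by
  rw [sign, parity_add_single, uzpow_add]
  split_ifs <;> simp [sign]

lemma sign_add_single_self (k : ι) (s : ι → ZMod 2) :
    sign k (s + Pi.single k 1) = sign k s := by
  rw [sign_add_single, if_neg (lt_irrefl k)]

lemma sign_mul_sign_add_single_of_ne {k l : ι} (h : k ≠ l) (s : ι → ZMod 2) :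
    sign k s * sign l (s + Pi.single k 1) = -(sign l s * sign k (s + Pi.single l 1)) := by
  rw [sign_add_single, sign_add_single]
  rcases h.lt_or_gt with h | h <;> simp [h, h.not_gt, mul_comm]

variable (R : Type*) [Ring R]

def gamma (k : ι) : Matrix (ι → ZMod 2) (ι → ZMod 2) R :=
  Matrix.of fun s t => if t = s + Pi.single k 1 then ((sign k s : ℤ) : R) else 0

lemma gamma_mul_gamma_apply (k l : ι) (s t : ι → ZMod 2) :
    (gamma R k * gamma R l) s t =
      if t = s + Pi.single k 1 + Pi.single l 1 then
        ((sign k s * sign l (s + Pi.single k 1) : ℤˣ) : R) else 0 := by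
  rw [Matrix.mul_apply, Finset.sum_eq_single (s + Pi.single k 1)]
  · split_ifs <;> simp [gamma, *]
  · intro u _ hu
    simp [gamma, hu]
  · simp

lemma gamma_mul_self (k : ι) : gamma R k * gamma R k = 1 := by
  ext s t
  rw [gamma_mul_gamma_apply, add_single_add_single_self, sign_add_single_self,
    Int.units_mul_self, Matrix.one_apply]
  simp [eq_comm]

lemma gamma_mul_gamma_of_ne {k l : ι} (h : k ≠ l) :
    gamma R k * gamma R l = -(gamma R l * gamma R k) := by
  ext s t
  rw [Matrix.neg_apply, gamma_mul_gamma_apply, gamma_mul_gamma_apply,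
    sign_mul_sign_add_single_of_ne h, add_right_comm]
  split_ifs <;> simp

lemma trace_gamma (k : ι) : (gamma R k).trace = 0 := by
  refine Finset.sum_eq_zero fun s _ => ?_
  have : s ≠ s + Pi.single k 1 := fun h => by simpa using congrFun h k
  simp [gamma, this]

lemma isHermitian_gamma [StarRing R] (k : ι) : (gamma R k).IsHermitian := by
  ext s t
  simp only [Matrix.conjTranspose_apply, gamma, Matrix.of_apply, eq_add_single_comm (s := s)]
  split_ifs with h
  · rw [h, sign_add_single_self, star_intCast]
  · exact star_zero R

end JordanWigner

lemma isIdempotentElem_inv_two_smul_one_add {K A : Type*} [Field K] [NeZero (2 : K)] [Ring A]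
    [Algebra K A] {u : A} (hu : u * u = 1) : IsIdempotentElem ((2 : K)⁻¹ • (1 + u)) := by
  have : (1 + u) * (1 + u) = (2 : K) • (1 + u) := by
    simp only [add_mul, mul_add, one_mul, mul_one, hu, two_smul]
    abel
  rw [IsIdempotentElem, smul_mul_smul, this, smul_smul, mul_assoc, inv_mul_cancel₀ two_ne_zero,
    mul_one]

lemma Matrix.trace_submatrix_equiv {R m n : Type*} [AddCommMonoid R] [Fintype m] [Fintype n]
    (e : m ≃ n) (A : Matrix n n R) : (A.submatrix e e).trace = A.trace :=
  Fintype.sum_equiv e _ _ fun _ => rfl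

section CliffordOperator

variable {𝕜 ι n : Type*} [RCLike 𝕜] [Fintype ι] (γ : ι → Matrix n n 𝕜)

def cliffordOp (a : EuclideanSpace ℝ ι) : Matrix n n 𝕜 := ∑ k, (a k : 𝕜) • γ k

lemma isHermitian_cliffordOp (hγ : ∀ k, (γ k).IsHermitian) (a : EuclideanSpace ℝ ι) :
    (cliffordOp γ a).IsHermitian :=
  isSelfAdjoint_sum _ fun k _ => (hγ k).smul (RCLike.conj_ofReal _)

section Fintype

variable [Fintype n]

lemma trace_cliffordOp (hγ : ∀ k, (γ k).trace = 0) (a : EuclideanSpace ℝ ι) :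
    (cliffordOp γ a).trace = 0 := by
  simp [cliffordOp, Matrix.trace_sum, hγ]

end Fintype

variable [DecidableEq n]

def cliffordProj (a : EuclideanSpace ℝ ι) (i : Fin 2) : Matrix n n 𝕜 :=
  (2 : 𝕜)⁻¹ • (1 + (-1 : 𝕜) ^ (i : ℕ) • cliffordOp γ a)

lemma isHermitian_cliffordProj (hγ : ∀ k, (γ k).IsHermitian) (a : EuclideanSpace ℝ ι)
    (i : Fin 2) : (cliffordProj γ a i).IsHermitian := by
  simp [cliffordProj, Matrix.IsHermitian, Matrix.conjTranspose_smul,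
    (isHermitian_cliffordOp γ hγ a).eq]

lemma cliffordProj_zero_add_one (a : EuclideanSpace ℝ ι) :
    cliffordProj γ a 0 + cliffordProj γ a 1 = 1 := by
  simp only [cliffordProj, Fin.val_zero, Fin.val_one, pow_zero, pow_one, one_smul, neg_one_smul,
    ← smul_add]
  rw [add_add_add_comm, add_neg_cancel, add_zero, ← two_smul 𝕜, smul_smul,
    inv_mul_cancel₀ two_ne_zero, one_smul]

variable [Fintype n]

lemma cliffordOp_mul_add_mul_comm (hsq : ∀ k, γ k * γ k = 1)
    (hanti : Pairwise fun k l => γ k * γ l = -(γ l * γ k)) (a b : EuclideanSpace ℝ ι) :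
    cliffordOp γ a * cliffordOp γ b + cliffordOp γ b * cliffordOp γ a =
      (2 * ⟪a, b⟫_ℝ : 𝕜) • 1 := by
  calc cliffordOp γ a * cliffordOp γ b + cliffordOp γ b * cliffordOp γ a
      = ∑ k, ∑ l, ((a k : 𝕜) * b l) • (γ k * γ l + γ l * γ k) := by
        simp only [cliffordOp, Finset.sum_mul, Finset.mul_sum, smul_mul_smul, smul_add,
          Finset.sum_add_distrib]
        congr 1
        · exact Finset.sum_comm
        · simp only [mul_comm]
    _ = ∑ k, ((a k : 𝕜) * b k) • (2 : 𝕜) • 1 := by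
        refine Finset.sum_congr rfl fun k _ => ?_
        rw [Finset.sum_eq_single k (fun l _ hl => by rw [hanti hl.symm, neg_add_cancel, smul_zero])
          (by simp), hsq, two_smul]
    _ = (2 * ⟪a, b⟫_ℝ : 𝕜) • 1 := by
        simp only [smul_smul, ← Finset.sum_smul, PiLp.inner_apply]
        congr 1
        push_cast
        simp [Finset.mul_sum, mul_comm]

lemma cliffordOp_mul_self (hsq : ∀ k, γ k * γ k = 1)
    (hanti : Pairwise fun k l => γ k * γ l = -(γ l * γ k)) {a : EuclideanSpace ℝ ι}
    (ha : ‖a‖ = 1) : cliffordOp γ a * cliffordOp γ a = 1 := by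
  have h := cliffordOp_mul_add_mul_comm γ hsq hanti a a
  rw [real_inner_self_eq_norm_sq, ha, ← two_smul 𝕜] at h
  simpa using h

lemma trace_cliffordOp_mul (hsq : ∀ k, γ k * γ k = 1)
    (hanti : Pairwise fun k l => γ k * γ l = -(γ l * γ k)) (a b : EuclideanSpace ℝ ι) :
    (cliffordOp γ a * cliffordOp γ b).trace = Fintype.card n * ⟪a, b⟫_ℝ := by
  have h := congrArg Matrix.trace (cliffordOp_mul_add_mul_comm γ hsq hanti a b)
  rw [Matrix.trace_add, Matrix.trace_mul_comm (cliffordOp γ b), Matrix.trace_smul,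
    Matrix.trace_one, smul_eq_mul] at h
  linear_combination h / 2

lemma cliffordProj_mul_self (hsq : ∀ k, γ k * γ k = 1)
    (hanti : Pairwise fun k l => γ k * γ l = -(γ l * γ k)) {a : EuclideanSpace ℝ ι}
    (ha : ‖a‖ = 1) (i : Fin 2) :
    cliffordProj γ a i * cliffordProj γ a i = cliffordProj γ a i :=
  isIdempotentElem_inv_two_smul_one_add <| by
    rw [smul_mul_smul, cliffordOp_mul_self γ hsq hanti ha, ← mul_pow, neg_one_mul, neg_neg,
      one_pow, one_smul]

lemma trace_cliffordProj_mul (hγ : ∀ k, (γ k).trace = 0) (hsq : ∀ k, γ k * γ k = 1)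
    (hanti : Pairwise fun k l => γ k * γ l = -(γ l * γ k)) (a b : EuclideanSpace ℝ ι)
    (i j : Fin 2) :
    (cliffordProj γ a i * cliffordProj γ b j).trace =
      Fintype.card n / 4 * (1 + (-1 : 𝕜) ^ ((i : ℕ) + j) * ⟪a, b⟫_ℝ) := by
  simp only [cliffordProj, smul_mul_smul, add_mul, mul_add, one_mul, mul_one, Matrix.trace_add,
    Matrix.trace_smul, Matrix.trace_one, trace_cliffordOp γ hγ, trace_cliffordOp_mul γ hsq hanti,
    smul_eq_mul]
  ring

end CliffordOperator

theorem stmt19_general {m n : ℕ} (x : Fin n → EuclideanSpace ℝ (Fin m))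
    (hx : ∀ v, ‖x v‖ = 1) :
    ∃ (d : ℕ), 1 ≤ d ∧
      ∃ P : Fin n → Fin 2 → Matrix (Fin d) (Fin d) ℂ,
        (∀ v i, IsProjMat (P v i)) ∧
        (∀ v, P v 0 + P v 1 = 1) ∧
        (∀ (v w : Fin n) (i j : Fin 2),
          (1 / (d : ℂ)) * (P v i * P w j).trace =
            ((1 / 4 * (1 + (-1 : ℝ) ^ ((i : ℕ) + (j : ℕ)) * inner ℝ (x v) (x w)) : ℝ) : ℂ)) := by
  let γ : Fin m → Matrix (Fin m → ZMod 2) (Fin m → ZMod 2) ℂ := JordanWigner.gamma ℂ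
  have hsq : ∀ k, γ k * γ k = 1 := JordanWigner.gamma_mul_self ℂ
  have hanti : Pairwise fun k l => γ k * γ l = -(γ l * γ k) :=
    fun _ _ => JordanWigner.gamma_mul_gamma_of_ne ℂ
  let e := (Fintype.equivFin (Fin m → ZMod 2)).symm
  refine ⟨_, Fintype.card_pos, fun v i => (cliffordProj γ (x v) i).submatrix e e, ?_, ?_, ?_⟩
  · exact fun v i =>
      ⟨(isHermitian_cliffordProj γ (JordanWigner.isHermitian_gamma ℂ) _ i).submatrix e,
        by rw [Matrix.submatrix_mul_equiv, cliffordProj_mul_self γ hsq hanti (hx v)]⟩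
  · exact fun v => (congrArg (Matrix.submatrix · e e) (cliffordProj_zero_add_one γ (x v))).trans
      (Matrix.submatrix_one_equiv e)
  · intro v w i j
    rw [Matrix.submatrix_mul_equiv, Matrix.trace_submatrix_equiv,
      trace_cliffordProj_mul γ (JordanWigner.trace_gamma ℂ) hsq hanti,
      RCLike.ofReal_eq_complex_ofReal]
    have : (Fintype.card (Fin m → ZMod 2) : ℂ) ≠ 0 :=
      Nat.cast_ne_zero.mpr Fintype.card_ne_zero
    push_cast
    field_simp

/-- Given unit vectors `x₁,…,xₙ ∈ ℝ^m`, there are `d ≥ 1` and projections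
`P_{v,i} ∈ M_d(ℂ)` with `P_{v,0} + P_{v,1} = I` and
`(1/d)·Tr(P_{v,i} P_{w,j}) = (1/4)(1 + (−1)^{i+j} ⟨x_v, x_w⟩)`. -/
theorem stmt19 {m n : ℕ} (hm : 1 ≤ m) (x : Fin n → EuclideanSpace ℝ (Fin m))
    (hx : ∀ v, ‖x v‖ = 1) :
    ∃ (d : ℕ), 1 ≤ d ∧
      ∃ P : Fin n → Fin 2 → Matrix (Fin d) (Fin d) ℂ,
        (∀ v i, IsProjMat (P v i)) ∧
        (∀ v, P v 0 + P v 1 = 1) ∧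
        (∀ (v w : Fin n) (i j : Fin 2),
          (1 / (d : ℂ)) * (P v i * P w j).trace =
            ((1 / 4 * (1 + (-1 : ℝ) ^ ((i : ℕ) + (j : ℕ)) * inner ℝ (x v) (x w)) : ℝ) : ℂ)) :=
  stmt19_general x hx
end
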